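/- arXiv:2511.19903 — 6 statements merged into one kernel-verified Lean document; each statement's English description precedes it below -/
import Mathlib

section
/- Let q, p : ℝ → ℝⁿ be differentiable curves satisfying Hamilton's equations q̇ᵢ(t) = pᵢ(t)/mᵢ and ṗᵢ(t) = −(∂V/∂qᵢ)(q(t)) for i = 1,…,n. Then the moment of inertia J(t) = Σᵢ mᵢ qᵢ(t)² is twice differentiable and satisfies Lagrange's identity J''(t) = 4T(p(t)) − 2k V(q(t)), where T(p) = Σᵢ pᵢ²/(2mᵢ); equivalently J''(t) = 4H(q(t),p(t)) − 2(k+2)V(q(t)). -/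
open scoped BigOperators

noncomputable section

/-- Phase space `T*ℝⁿ = ℝⁿ × ℝⁿ`, points `x = (q, p)`. -/
abbrev Phase (n : ℕ) := (Fin n → ℝ) × (Fin n → ℝ)

/-- Partial derivative `∂f/∂qᵢ` of a function on phase space. -/
def dq {n : ℕ} (f : Phase n → ℝ) (i : Fin n) (x : Phase n) : ℝ :=
  fderiv ℝ f x (Pi.single i 1, 0)

/-- Partial derivative `∂f/∂pᵢ` of a function on phase space. -/
def dp {n : ℕ} (f : Phase n → ℝ) (i : Fin n) (x : Phase n) : ℝ :=
  fderiv ℝ f x (0, Pi.single i 1)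

/-- Partial derivative `∂V/∂qᵢ` of a potential on configuration space. -/
def dV {n : ℕ} (V : (Fin n → ℝ) → ℝ) (i : Fin n) (q : Fin n → ℝ) : ℝ :=
  fderiv ℝ V q (Pi.single i 1)

/-- The Hamiltonian `H(q,p) = Σᵢ pᵢ²/(2mᵢ) + V(q)`. -/
def Ham {n : ℕ} (m : Fin n → ℝ) (V : (Fin n → ℝ) → ℝ) (x : Phase n) : ℝ :=
  (∑ i, x.2 i ^ 2 / (2 * m i)) + V x.1

/-- The Hamiltonian vector field `X` acting on functions:
`Xf = Σᵢ (pᵢ/mᵢ) ∂f/∂qᵢ − (∂V/∂qᵢ) ∂f/∂pᵢ`. -/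
def Xop {n : ℕ} (m : Fin n → ℝ) (V : (Fin n → ℝ) → ℝ) (f : Phase n → ℝ) (x : Phase n) : ℝ :=
  ∑ i, (x.2 i / m i * dq f i x - dV V i x.1 * dp f i x)

/-- The canonical Poisson bracket `{f,g} = Σᵢ (∂f/∂qᵢ ∂g/∂pᵢ − ∂f/∂pᵢ ∂g/∂qᵢ)`. -/
def bracketC {n : ℕ} (f g : Phase n → ℝ) (x : Phase n) : ℝ :=
  ∑ i, (dq f i x * dp g i x - dp f i x * dq g i x)

/-- `Aᵢⱼ = pᵢqⱼ/mᵢ − pⱼqᵢ/mⱼ`. -/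
def Acoef {n : ℕ} (m : Fin n → ℝ) (i j : Fin n) (x : Phase n) : ℝ :=
  x.2 i * x.1 j / m i - x.2 j * x.1 i / m j

/-- `Bᵢⱼ = (k/(2mᵢ)) pᵢpⱼ + qᵢ ∂V/∂qⱼ`. -/
def Bcoef {n : ℕ} (m : Fin n → ℝ) (k : ℝ) (V : (Fin n → ℝ) → ℝ) (i j : Fin n)
    (x : Phase n) : ℝ :=
  k / (2 * m i) * (x.2 i * x.2 j) + x.1 i * dV V j x.1

/-- `Cᵢⱼ = (k/2)(pᵢ ∂V/∂qⱼ − pⱼ ∂V/∂qᵢ)`. -/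
def Ccoef {n : ℕ} (k : ℝ) (V : (Fin n → ℝ) → ℝ) (i j : Fin n) (x : Phase n) : ℝ :=
  k / 2 * (x.2 i * dV V j x.1 - x.2 j * dV V i x.1)

/-- The bracket `{f,g}′` associated with the bivector `P′`. -/
def bracketP {n : ℕ} (m : Fin n → ℝ) (k : ℝ) (V : (Fin n → ℝ) → ℝ)
    (f g : Phase n → ℝ) (x : Phase n) : ℝ :=
  ∑ i, ∑ j,
    (Acoef m i j x * (dq f i x * dq g j x)
      + Bcoef m k V i j x * (dq f i x * dp g j x - dp f j x * dq g i x)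
      + Ccoef k V i j x * (dp f i x * dp g j x))

/-- Lagrange's identity.  If `q(t), p(t)` satisfy Hamilton's equations
`q̇ᵢ = pᵢ/mᵢ`, `ṗᵢ = −∂V/∂qᵢ` for a potential `V` homogeneous of degree `k`, then the
moment of inertia `J(t) = Σᵢ mᵢ qᵢ(t)²` is twice differentiable and
`J'' = 4T − 2kV = 4H − 2(k+2)V`. -/
theorem lagrange_identity (n : ℕ) (m : Fin n → ℝ) (hm : ∀ i, 0 < m i) (k : ℝ)
    (V : (Fin n → ℝ) → ℝ) (hV : ContDiff ℝ (⊤ : ℕ∞) V)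
    (hEuler : ∀ q : Fin n → ℝ, ∑ i, q i * dV V i q = k * V q)
    (q p : ℝ → Fin n → ℝ)
    (hq : ∀ t (i : Fin n), HasDerivAt (fun s => q s i) (p t i / m i) t)
    (hp : ∀ t (i : Fin n), HasDerivAt (fun s => p s i) (-(dV V i (q t))) t) :
    ∀ t : ℝ,
      DifferentiableAt ℝ (fun s => ∑ i, m i * q s i ^ 2) t ∧
      DifferentiableAt ℝ (deriv (fun s => ∑ i, m i * q s i ^ 2)) t ∧
      deriv (deriv (fun s => ∑ i, m i * q s i ^ 2)) t
        = 4 * (∑ i, p t i ^ 2 / (2 * m i)) - 2 * k * V (q t) ∧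
      deriv (deriv (fun s => ∑ i, m i * q s i ^ 2)) t
        = 4 * Ham m V (q t, p t) - 2 * (k + 2) * V (q t) := by
  intro t
  -- first derivative
  have hJ : ∀ s, HasDerivAt (fun s => ∑ i, m i * q s i ^ 2)
      (∑ i, 2 * (q s i * p s i)) s := by
    intro s
    apply HasDerivAt.fun_sum
    intro i _
    have h := ((hq s i).fun_pow 2).const_mul (m i)
    convert h using 1
    · rfl
    have hmi : (m i) ≠ 0 := ne_of_gt (hm i)
    field_simp
    ring
  have hderiv : deriv (fun s => ∑ i, m i * q s i ^ 2)
      = fun s => ∑ i, 2 * (q s i * p s i) := by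
    funext s
    exact (hJ s).deriv
  -- second derivative
  have hJ2 : HasDerivAt (fun s => ∑ i, 2 * (q s i * p s i))
      (∑ i, 2 * (p t i / m i * p t i + q t i * (-(dV V i (q t))))) t := by
    apply HasDerivAt.fun_sum
    intro i _
    exact ((hq t i).mul (hp t i)).const_mul 2
  have hval : deriv (deriv (fun s => ∑ i, m i * q s i ^ 2)) t
      = ∑ i, 2 * (p t i / m i * p t i + q t i * (-(dV V i (q t)))) := by
    rw [hderiv]
    exact hJ2.deriv
  have hsum : (∑ i, 2 * (p t i / m i * p t i + q t i * (-(dV V i (q t)))))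
      = 4 * (∑ i, p t i ^ 2 / (2 * m i)) - 2 * k * V (q t) := by
    have : ∀ i : Fin n, 2 * (p t i / m i * p t i + q t i * (-(dV V i (q t))))
        = 4 * (p t i ^ 2 / (2 * m i)) - 2 * (q t i * dV V i (q t)) := by
      intro i
      have hmi : (m i) ≠ 0 := ne_of_gt (hm i)
      field_simp
      ring
    rw [Finset.sum_congr rfl (fun i _ => this i), Finset.sum_sub_distrib,
      ← Finset.mul_sum, ← Finset.mul_sum, hEuler (q t)]
    ring
  refine ⟨(hJ t).differentiableAt, ?_, ?_, ?_⟩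
  · rw [hderiv]; exact hJ2.differentiableAt
  · rw [hval, hsum]
  · rw [hval, hsum, Ham]
    ring
end
end

section
/- For all smooth functions f, g : ℝⁿ×ℝⁿ → ℝ one has the identity X({f,g}′) = {Xf, g}′ + {f, Xg}′ at every point of ℝⁿ×ℝⁿ; that is, the bivector P′ defining the bracket {·,·}′ is invariant under the phase flow of the Hamiltonian vector field X (its Lie derivative along X vanishes). -/
open scoped BigOperators

noncomputable section

section Toolkit
variable {E : Type*} [NormedAddCommGroup E] [NormedSpace ℝ E]

lemma contDiff_D {h : E → ℝ} (hh : ContDiff ℝ (⊤ : ℕ∞) h) (v : E) :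
    ContDiff ℝ (⊤ : ℕ∞) (fun y => fderiv ℝ h y v) :=
  (hh.fderiv_right (by simp)).clm_apply contDiff_const

lemma diffAt_D {h : E → ℝ} (hh : ContDiff ℝ (⊤ : ℕ∞) h) (v : E) (x : E) :
    DifferentiableAt ℝ (fun y => fderiv ℝ h y v) x :=
  ((contDiff_D hh v).differentiable (by simp)) x

lemma D_symm {h : E → ℝ} (hh : ContDiff ℝ (⊤ : ℕ∞) h) (x v w : E) :
    fderiv ℝ (fun y => fderiv ℝ h y v) x w = fderiv ℝ (fun y => fderiv ℝ h y w) x v := by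
  have hd : DifferentiableAt ℝ (fderiv ℝ h) x :=
    ((hh.fderiv_right (m := (⊤ : ℕ∞)) (by simp)).differentiable (by simp)) x
  have hsym : IsSymmSndFDerivAt ℝ h x := hh.contDiffAt.isSymmSndFDerivAt (by rw [minSmoothness_of_isRCLikeNormedField]; exact WithTop.coe_le_coe.mpr (le_top : (2 : ℕ∞) ≤ ⊤))
  rw [fderiv_clm_apply hd (differentiableAt_const v), fderiv_clm_apply hd (differentiableAt_const w)]
  simp [hsym v w]

lemma fderiv_mul_apply {c d : E → ℝ} {x : E} (hc : DifferentiableAt ℝ c x)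
    (hd : DifferentiableAt ℝ d x) (v : E) :
    fderiv ℝ (fun y => c y * d y) x v = fderiv ℝ c x v * d x + c x * fderiv ℝ d x v := by
  rw [fderiv_fun_mul hc hd]; simp [smul_eq_mul]; ring

lemma fderiv_sum_apply' {ι : Type*} (s : Finset ι) {F : ι → E → ℝ} {x : E}
    (hF : ∀ i ∈ s, DifferentiableAt ℝ (F i) x) (v : E) :
    fderiv ℝ (fun y => ∑ i ∈ s, F i y) x v = ∑ i ∈ s, fderiv ℝ (F i) x v := by
  rw [fderiv_fun_sum hF]; simp

lemma fderiv_add_apply' {c d : E → ℝ} {x : E} (hc : DifferentiableAt ℝ c x)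
    (hd : DifferentiableAt ℝ d x) (v : E) :
    fderiv ℝ (fun y => c y + d y) x v = fderiv ℝ c x v + fderiv ℝ d x v := by
  rw [fderiv_fun_add hc hd]; simp

lemma fderiv_sub_apply' {c d : E → ℝ} {x : E} (hc : DifferentiableAt ℝ c x)
    (hd : DifferentiableAt ℝ d x) (v : E) :
    fderiv ℝ (fun y => c y - d y) x v = fderiv ℝ c x v - fderiv ℝ d x v := by
  rw [fderiv_fun_sub hc hd]; simp

end Toolkit

section PhaseTools
variable {n : ℕ}

def E1 (i : Fin n) : Phase n := (Pi.single i 1, 0)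
def E2 (i : Fin n) : Phase n := (0, Pi.single i 1)

def coordq (j : Fin n) : Phase n →L[ℝ] ℝ :=
  (ContinuousLinearMap.proj j).comp (ContinuousLinearMap.fst ℝ (Fin n → ℝ) (Fin n → ℝ))
def coordp (j : Fin n) : Phase n →L[ℝ] ℝ :=
  (ContinuousLinearMap.proj j).comp (ContinuousLinearMap.snd ℝ (Fin n → ℝ) (Fin n → ℝ))

lemma coordq_eq (j : Fin n) : (fun y : Phase n => y.1 j) = coordq j := rfl
lemma coordp_eq (j : Fin n) : (fun y : Phase n => y.2 j) = coordp j := rfl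

lemma fderiv_coordq (j : Fin n) (x v : Phase n) :
    fderiv ℝ (fun y : Phase n => y.1 j) x v = v.1 j := by
  rw [coordq_eq, ContinuousLinearMap.fderiv]; rfl

lemma fderiv_coordp (j : Fin n) (x v : Phase n) :
    fderiv ℝ (fun y : Phase n => y.2 j) x v = v.2 j := by
  rw [coordp_eq, ContinuousLinearMap.fderiv]; rfl

lemma diffAt_coordq (j : Fin n) (x : Phase n) :
    DifferentiableAt ℝ (fun y : Phase n => y.1 j) x := (coordq j).differentiableAt
lemma diffAt_coordp (j : Fin n) (x : Phase n) :
    DifferentiableAt ℝ (fun y : Phase n => y.2 j) x := (coordp j).differentiableAt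

variable {V : (Fin n → ℝ) → ℝ}

lemma contDiff_dVq (hV : ContDiff ℝ (⊤ : ℕ∞) V) (j : Fin n) : ContDiff ℝ (⊤ : ℕ∞) (dV V j) :=
  contDiff_D hV (Pi.single j 1)

lemma contDiff_dVfst (hV : ContDiff ℝ (⊤ : ℕ∞) V) (j : Fin n) :
    ContDiff ℝ (⊤ : ℕ∞) (fun y : Phase n => dV V j y.1) :=
  (contDiff_dVq hV j).comp contDiff_fst

lemma diffAt_dVfst (hV : ContDiff ℝ (⊤ : ℕ∞) V) (j : Fin n) (x : Phase n) :
    DifferentiableAt ℝ (fun y : Phase n => dV V j y.1) x :=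
  ((contDiff_dVfst hV j).differentiable (by simp)) x

lemma fderiv_dVfst_apply (hV : ContDiff ℝ (⊤ : ℕ∞) V) (j : Fin n) (x v : Phase n) :
    fderiv ℝ (fun y : Phase n => dV V j y.1) x v = fderiv ℝ (dV V j) x.1 v.1 := by
  have h1 : HasFDerivAt (fun y : Phase n => dV V j y.1)
      ((fderiv ℝ (dV V j) x.1).comp (ContinuousLinearMap.fst ℝ (Fin n → ℝ) (Fin n → ℝ))) x :=
    (((contDiff_dVq hV j).differentiable (by simp) x.1).hasFDerivAt).comp x hasFDerivAt_fst
  rw [h1.fderiv]; rfl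

lemma contDiff_dq {f : Phase n → ℝ} (hf : ContDiff ℝ (⊤ : ℕ∞) f) (i : Fin n) :
    ContDiff ℝ (⊤ : ℕ∞) (dq f i) := contDiff_D hf (E1 i)
lemma contDiff_dp {f : Phase n → ℝ} (hf : ContDiff ℝ (⊤ : ℕ∞) f) (i : Fin n) :
    ContDiff ℝ (⊤ : ℕ∞) (dp f i) := contDiff_D hf (E2 i)
lemma diffAt_dq {f : Phase n → ℝ} (hf : ContDiff ℝ (⊤ : ℕ∞) f) (i : Fin n) (x : Phase n) :
    DifferentiableAt ℝ (dq f i) x := diffAt_D hf (E1 i) x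
lemma diffAt_dp {f : Phase n → ℝ} (hf : ContDiff ℝ (⊤ : ℕ∞) f) (i : Fin n) (x : Phase n) :
    DifferentiableAt ℝ (dp f i) x := diffAt_D hf (E2 i) x

lemma kron_sum (c : Fin n → ℝ) (i : Fin n) :
    ∑ j, (Pi.single i 1 : Fin n → ℝ) j * c j = c i := by
  simp [Pi.single_apply]

end PhaseTools

section Ops
variable {n : ℕ}

def Zop (k : ℝ) (h : Phase n → ℝ) (x : Phase n) : ℝ :=
  ∑ i, (x.1 i * dq h i x + k / 2 * x.2 i * dp h i x)

variable {m : Fin n → ℝ} {k : ℝ} {V : (Fin n → ℝ) → ℝ} {h : Phase n → ℝ}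

lemma D_lincomb (c d : Fin n → Phase n → ℝ) (hh : ContDiff ℝ (⊤ : ℕ∞) h) (x : Phase n)
    (hc : ∀ j, DifferentiableAt ℝ (c j) x) (hd : ∀ j, DifferentiableAt ℝ (d j) x) (v : Phase n) :
    fderiv ℝ (fun y => ∑ j, (c j y * dq h j y + d j y * dp h j y)) x v
      = ∑ j, ((fderiv ℝ (c j) x v * dq h j x + c j x * fderiv ℝ (dq h j) x v)
            + (fderiv ℝ (d j) x v * dp h j x + d j x * fderiv ℝ (dp h j) x v)) := by
  rw [fderiv_sum_apply' _
    (fun j _ => ((hc j).fun_mul (diffAt_dq hh j x)).fun_add ((hd j).fun_mul (diffAt_dp hh j x))) v]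
  refine Finset.sum_congr rfl fun j _ => ?_
  rw [fderiv_add_apply' ((hc j).fun_mul (diffAt_dq hh j x)) ((hd j).fun_mul (diffAt_dp hh j x)) v,
      fderiv_mul_apply (hc j) (diffAt_dq hh j x) v, fderiv_mul_apply (hd j) (diffAt_dp hh j x) v]

lemma D_Zop (hh : ContDiff ℝ (⊤ : ℕ∞) h) (x v : Phase n) :
    fderiv ℝ (Zop k h) x v
      = ∑ j, ((v.1 j * dq h j x + x.1 j * fderiv ℝ (dq h j) x v)
            + (k / 2 * v.2 j * dp h j x + k / 2 * x.2 j * fderiv ℝ (dp h j) x v)) := by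
  have hrep : Zop k h = fun y => ∑ j, ((fun y : Phase n => y.1 j) y * dq h j y
      + (fun y : Phase n => k / 2 * y.2 j) y * dp h j y) := rfl
  rw [hrep, D_lincomb _ _ hh x (fun j => diffAt_coordq j x)
      (fun j => (diffAt_coordp j x).const_mul _) v]
  refine Finset.sum_congr rfl fun j _ => ?_
  rw [fderiv_coordq j x v, fderiv_const_mul (diffAt_coordp j x)]
  simp only [ContinuousLinearMap.coe_smul', Pi.smul_apply, smul_eq_mul, fderiv_coordp j x v]

lemma Xop_rep : (fun y => Xop m V h y)
    = fun y => ∑ j, ((fun y : Phase n => y.2 j / m j) y * dq h j y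
        + (fun y : Phase n => -(dV V j y.1)) y * dp h j y) := by
  funext y
  exact Finset.sum_congr rfl fun j _ => by ring

lemma D_Xop (hV : ContDiff ℝ (⊤ : ℕ∞) V) (hh : ContDiff ℝ (⊤ : ℕ∞) h) (x v : Phase n) :
    fderiv ℝ (fun y => Xop m V h y) x v
      = ∑ j, ((v.2 j / m j * dq h j x + x.2 j / m j * fderiv ℝ (dq h j) x v)
            - (fderiv ℝ (dV V j) x.1 v.1 * dp h j x + dV V j x.1 * fderiv ℝ (dp h j) x v)) := by
  rw [Xop_rep, D_lincomb _ _ hh x (fun j => by fun_prop)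
      (fun j => (diffAt_dVfst hV j x).fun_neg) v]
  refine Finset.sum_congr rfl fun j _ => ?_
  have h1 : fderiv ℝ (fun y : Phase n => y.2 j / m j) x v = v.2 j / m j := by
    have hrw : (fun y : Phase n => y.2 j / m j) = fun y : Phase n => (m j)⁻¹ * y.2 j := by
      funext y; ring
    rw [hrw, fderiv_const_mul (diffAt_coordp j x)]
    simp only [ContinuousLinearMap.coe_smul', Pi.smul_apply, smul_eq_mul]
    rw [fderiv_coordp j x v]; ring
  have h2 : fderiv ℝ (fun y : Phase n => -(dV V j y.1)) x v
      = -(fderiv ℝ (dV V j) x.1 v.1) := by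
    rw [fderiv_fun_neg]
    simp only [ContinuousLinearMap.neg_apply]
    rw [fderiv_dVfst_apply hV j x v]
  rw [h1, h2]; ring

end Ops

section Main
variable {n : ℕ} {m : Fin n → ℝ} {k : ℝ} {V : (Fin n → ℝ) → ℝ} {h : Phase n → ℝ}

lemma dq_Zop (hh : ContDiff ℝ (⊤ : ℕ∞) h) (i : Fin n) (x : Phase n) :
    dq (Zop k h) i x = dq h i x + ∑ j, (x.1 j * fderiv ℝ (dq h j) x (E1 i)
      + k / 2 * (x.2 j * fderiv ℝ (dp h j) x (E1 i))) := by
  have e0 : dq (Zop k h) i x = fderiv ℝ (Zop k h) x (E1 i) := rfl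
  rw [e0, D_Zop hh x (E1 i)]
  have e1 : ∀ j ∈ (Finset.univ : Finset (Fin n)),
      (((E1 i).1 j * dq h j x + x.1 j * fderiv ℝ (dq h j) x (E1 i))
        + (k / 2 * (E1 i).2 j * dp h j x + k / 2 * x.2 j * fderiv ℝ (dp h j) x (E1 i)))
      = (Pi.single i 1 : Fin n → ℝ) j * dq h j x + (x.1 j * fderiv ℝ (dq h j) x (E1 i)
          + k / 2 * (x.2 j * fderiv ℝ (dp h j) x (E1 i))) := by
    intro j _
    have h1 : (E1 i).1 j = (Pi.single i 1 : Fin n → ℝ) j := rfl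
    have h2 : (E1 i).2 j = (0:ℝ) := rfl
    rw [h1, h2]; ring
  rw [Finset.sum_congr rfl e1, Finset.sum_add_distrib, kron_sum]

lemma dp_Zop (hh : ContDiff ℝ (⊤ : ℕ∞) h) (i : Fin n) (x : Phase n) :
    dp (Zop k h) i x = k / 2 * dp h i x + ∑ j, (x.1 j * fderiv ℝ (dq h j) x (E2 i)
      + k / 2 * (x.2 j * fderiv ℝ (dp h j) x (E2 i))) := by
  have e0 : dp (Zop k h) i x = fderiv ℝ (Zop k h) x (E2 i) := rfl
  rw [e0, D_Zop hh x (E2 i)]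
  have e1 : ∀ j ∈ (Finset.univ : Finset (Fin n)),
      (((E2 i).1 j * dq h j x + x.1 j * fderiv ℝ (dq h j) x (E2 i))
        + (k / 2 * (E2 i).2 j * dp h j x + k / 2 * x.2 j * fderiv ℝ (dp h j) x (E2 i)))
      = (Pi.single i 1 : Fin n → ℝ) j * (k / 2 * dp h j x) + (x.1 j * fderiv ℝ (dq h j) x (E2 i)
          + k / 2 * (x.2 j * fderiv ℝ (dp h j) x (E2 i))) := by
    intro j _
    have h1 : (E2 i).1 j = (0:ℝ) := rfl
    have h2 : (E2 i).2 j = (Pi.single i 1 : Fin n → ℝ) j := rfl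
    rw [h1, h2]; ring
  rw [Finset.sum_congr rfl e1, Finset.sum_add_distrib, kron_sum]

lemma dq_Xop (hV : ContDiff ℝ (⊤ : ℕ∞) V) (hh : ContDiff ℝ (⊤ : ℕ∞) h) (i : Fin n) (x : Phase n) :
    dq (fun y => Xop m V h y) i x = ∑ j, (x.2 j / m j * fderiv ℝ (dq h j) x (E1 i)
      - (fderiv ℝ (dV V j) x.1 (Pi.single i 1) * dp h j x
          + dV V j x.1 * fderiv ℝ (dp h j) x (E1 i))) := by
  have e0 : dq (fun y => Xop m V h y) i x = fderiv ℝ (fun y => Xop m V h y) x (E1 i) := rfl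
  rw [e0, D_Xop hV hh x (E1 i)]
  refine Finset.sum_congr rfl fun j _ => ?_
  have h1 : (E1 i).2 j = (0:ℝ) := rfl
  have h2 : (E1 i).1 = (Pi.single i 1 : Fin n → ℝ) := rfl
  rw [h1, h2]; ring

lemma dp_Xop (hV : ContDiff ℝ (⊤ : ℕ∞) V) (hh : ContDiff ℝ (⊤ : ℕ∞) h) (i : Fin n) (x : Phase n) :
    dp (fun y => Xop m V h y) i x = dq h i x / m i
      + ∑ j, (x.2 j / m j * fderiv ℝ (dq h j) x (E2 i)
          - dV V j x.1 * fderiv ℝ (dp h j) x (E2 i)) := by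
  have e0 : dp (fun y => Xop m V h y) i x = fderiv ℝ (fun y => Xop m V h y) x (E2 i) := rfl
  rw [e0, D_Xop hV hh x (E2 i)]
  have e1 : ∀ j ∈ (Finset.univ : Finset (Fin n)),
      (((E2 i).2 j / m j * dq h j x + x.2 j / m j * fderiv ℝ (dq h j) x (E2 i))
        - (fderiv ℝ (dV V j) x.1 (E2 i).1 * dp h j x
            + dV V j x.1 * fderiv ℝ (dp h j) x (E2 i)))
      = (Pi.single i 1 : Fin n → ℝ) j * (dq h j x / m j)
          + (x.2 j / m j * fderiv ℝ (dq h j) x (E2 i)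
              - dV V j x.1 * fderiv ℝ (dp h j) x (E2 i)) := by
    intro j _
    have h1 : (E2 i).2 j = (Pi.single i 1 : Fin n → ℝ) j := rfl
    have h2 : (E2 i).1 = (0 : Fin n → ℝ) := rfl
    rw [h1, h2, (fderiv ℝ (dV V j) x.1).map_zero]; ring
  rw [Finset.sum_congr rfl e1, Finset.sum_add_distrib, kron_sum]

lemma euler' (hV : ContDiff ℝ (⊤ : ℕ∞) V) (hEuler : ∀ q : Fin n → ℝ, ∑ i, q i * dV V i q = k * V q)
    (q : Fin n → ℝ) (i : Fin n) :
    ∑ j, q j * fderiv ℝ (dV V j) q (Pi.single i 1) = (k - 1) * dV V i q := by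
  have hdV : ∀ j, DifferentiableAt ℝ (dV V j) q := fun j => diffAt_D hV (Pi.single j 1) q
  have hproj : ∀ j : Fin n, DifferentiableAt ℝ (fun q' : Fin n → ℝ => q' j) q :=
    fun j => (ContinuousLinearMap.proj (R := ℝ) (φ := fun _ : Fin n => ℝ) j).differentiableAt
  have h1 : fderiv ℝ (fun q' => ∑ j, q' j * dV V j q') q (Pi.single i 1)
      = ∑ j, ((Pi.single i 1 : Fin n → ℝ) j * dV V j q
          + q j * fderiv ℝ (dV V j) q (Pi.single i 1)) := by
    rw [fderiv_sum_apply' _ (fun j _ => (hproj j).fun_mul (hdV j)) (Pi.single i 1)]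
    refine Finset.sum_congr rfl fun j _ => ?_
    rw [fderiv_mul_apply (hproj j) (hdV j) (Pi.single i 1)]
    have hp : fderiv ℝ (fun q' : Fin n → ℝ => q' j) q (Pi.single i 1)
        = (Pi.single i 1 : Fin n → ℝ) j := by
      rw [show (fun q' : Fin n → ℝ => q' j)
          = (ContinuousLinearMap.proj (R := ℝ) (φ := fun _ : Fin n => ℝ) j) from rfl,
        ContinuousLinearMap.fderiv]
      rfl
    rw [hp]
  have h2 : (fun q' : Fin n → ℝ => ∑ j, q' j * dV V j q') = fun q' => k * V q' :=
    funext hEuler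
  have h3 : fderiv ℝ (fun q' : Fin n → ℝ => k * V q') q (Pi.single i 1) = k * dV V i q := by
    rw [fderiv_const_mul (hV.differentiable (by simp) q)]
    simp only [ContinuousLinearMap.coe_smul', Pi.smul_apply, smul_eq_mul]
    rfl
  rw [h2, h3] at h1
  rw [Finset.sum_add_distrib, kron_sum] at h1
  linarith [h1]

end Main

section KeyAlg
variable {n : ℕ}

lemma key_algebra (k : ℝ) (mm Q P Vv a b : Fin n → ℝ) (W G1 G2 G3 G4 : Fin n → Fin n → ℝ)
    (hW : ∀ i j, W i j = W j i) (hG1 : ∀ i j, G1 i j = G1 j i) (hG4 : ∀ i j, G4 i j = G4 j i)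
    (hG23 : ∀ i j, G2 i j = G3 j i)
    (hE : ∀ i, ∑ j, Q j * W i j = (k - 1) * Vv i) :
    ∑ i, (P i / mm i * (a i + ∑ j, (Q j * G1 i j + k / 2 * (P j * G2 i j)))
        - Vv i * (k / 2 * b i + ∑ j, (Q j * G3 i j + k / 2 * (P j * G4 i j))))
      = ∑ i, (Q i * (∑ j, (P j / mm j * G1 i j - (W i j * b j + Vv j * G2 i j)))
          + k / 2 * P i * (a i / mm i + ∑ j, (P j / mm j * G3 i j - Vv j * G4 i j)))
        + (1 - k / 2) * ∑ i, (P i / mm i * a i - Vv i * b i) := by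
  have hL : ∑ i, (P i / mm i * (a i + ∑ j, (Q j * G1 i j + k / 2 * (P j * G2 i j)))
        - Vv i * (k / 2 * b i + ∑ j, (Q j * G3 i j + k / 2 * (P j * G4 i j))))
      = (∑ i, ∑ j, (P i / mm i * Q j * G1 i j + k / 2 * (P i / mm i) * (P j * G2 i j)
          - Vv i * Q j * G3 i j - k / 2 * Vv i * (P j * G4 i j)))
        + ∑ i, (P i / mm i * a i - k / 2 * (Vv i * b i)) := by
    rw [← Finset.sum_add_distrib]
    refine Finset.sum_congr rfl fun i _ => ?_
    have h2 : P i / mm i * (a i + ∑ j, (Q j * G1 i j + k / 2 * (P j * G2 i j)))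
        = P i / mm i * a i + ∑ j, P i / mm i * (Q j * G1 i j + k / 2 * (P j * G2 i j)) := by
      rw [mul_add, Finset.mul_sum]
    have h3 : Vv i * (k / 2 * b i + ∑ j, (Q j * G3 i j + k / 2 * (P j * G4 i j)))
        = Vv i * (k / 2 * b i) + ∑ j, Vv i * (Q j * G3 i j + k / 2 * (P j * G4 i j)) := by
      rw [mul_add, Finset.mul_sum]
    have h4 : ∑ j, P i / mm i * (Q j * G1 i j + k / 2 * (P j * G2 i j))
        - ∑ j, Vv i * (Q j * G3 i j + k / 2 * (P j * G4 i j))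
        = ∑ j, (P i / mm i * Q j * G1 i j + k / 2 * (P i / mm i) * (P j * G2 i j)
            - Vv i * Q j * G3 i j - k / 2 * Vv i * (P j * G4 i j)) := by
      rw [← Finset.sum_sub_distrib]
      exact Finset.sum_congr rfl fun j _ => by ring
    linear_combination h2 - h3 + h4
  have hψ : ∑ i, (Q i * (∑ j, (P j / mm j * G1 i j - (W i j * b j + Vv j * G2 i j)))
          + k / 2 * P i * (a i / mm i + ∑ j, (P j / mm j * G3 i j - Vv j * G4 i j)))
      = (∑ i, ∑ j, (Q i * (P j / mm j * G1 i j) - Q i * (Vv j * G2 i j)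
            + k / 2 * P i * (P j / mm j * G3 i j) - k / 2 * P i * (Vv j * G4 i j)
            - Q i * (W i j * b j)))
        + ∑ i, k / 2 * P i * (a i / mm i) := by
    rw [← Finset.sum_add_distrib]
    refine Finset.sum_congr rfl fun i _ => ?_
    have h2 : Q i * (∑ j, (P j / mm j * G1 i j - (W i j * b j + Vv j * G2 i j)))
        = ∑ j, Q i * (P j / mm j * G1 i j - (W i j * b j + Vv j * G2 i j)) :=
      Finset.mul_sum _ _ _
    have h3 : k / 2 * P i * (a i / mm i + ∑ j, (P j / mm j * G3 i j - Vv j * G4 i j))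
        = k / 2 * P i * (a i / mm i)
          + ∑ j, k / 2 * P i * (P j / mm j * G3 i j - Vv j * G4 i j) := by
      rw [mul_add, Finset.mul_sum]
    have h4 : ∑ j, Q i * (P j / mm j * G1 i j - (W i j * b j + Vv j * G2 i j))
        + ∑ j, k / 2 * P i * (P j / mm j * G3 i j - Vv j * G4 i j)
        = ∑ j, (Q i * (P j / mm j * G1 i j) - Q i * (Vv j * G2 i j)
            + k / 2 * P i * (P j / mm j * G3 i j) - k / 2 * P i * (Vv j * G4 i j)
            - Q i * (W i j * b j)) := by
      rw [← Finset.sum_add_distrib]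
      exact Finset.sum_congr rfl fun j _ => by ring
    linear_combination h2 + h3 + h4
  have hsplit : ∑ i, ∑ j, (Q i * (P j / mm j * G1 i j) - Q i * (Vv j * G2 i j)
            + k / 2 * P i * (P j / mm j * G3 i j) - k / 2 * P i * (Vv j * G4 i j)
            - Q i * (W i j * b j))
      = (∑ i, ∑ j, (Q i * (P j / mm j * G1 i j) - Q i * (Vv j * G2 i j)
            + k / 2 * P i * (P j / mm j * G3 i j) - k / 2 * P i * (Vv j * G4 i j)))
        - ∑ i, ∑ j, Q i * (W i j * b j) := by
    rw [← Finset.sum_sub_distrib]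
    refine Finset.sum_congr rfl fun i _ => ?_
    rw [← Finset.sum_sub_distrib]
  have hswap : ∑ i, ∑ j, (Q i * (P j / mm j * G1 i j) - Q i * (Vv j * G2 i j)
            + k / 2 * P i * (P j / mm j * G3 i j) - k / 2 * P i * (Vv j * G4 i j))
      = ∑ i, ∑ j, (P i / mm i * Q j * G1 i j + k / 2 * (P i / mm i) * (P j * G2 i j)
          - Vv i * Q j * G3 i j - k / 2 * Vv i * (P j * G4 i j)) := by
    rw [Finset.sum_comm]
    refine Finset.sum_congr rfl fun i _ => Finset.sum_congr rfl fun j _ => ?_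
    rw [hG1 j i, hG23 j i, ← hG23 i j, hG4 j i]
    ring
  have hWb : ∑ i, ∑ j, Q i * (W i j * b j) = ∑ i, (k - 1) * Vv i * b i := by
    rw [Finset.sum_comm]
    refine Finset.sum_congr rfl fun j _ => ?_
    have h1 : ∑ i, Q i * (W i j * b j) = (∑ i, Q i * W j i) * b j := by
      rw [Finset.sum_mul]
      exact Finset.sum_congr rfl fun i _ => by rw [hW i j]; ring
    rw [h1, hE j]
  have hS : ∑ i, (P i / mm i * a i - k / 2 * (Vv i * b i))
      = ∑ i, k / 2 * P i * (a i / mm i) - ∑ i, (k - 1) * Vv i * b i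
        + (1 - k / 2) * ∑ i, (P i / mm i * a i - Vv i * b i) := by
    rw [Finset.mul_sum, ← Finset.sum_sub_distrib, ← Finset.sum_add_distrib]
    exact Finset.sum_congr rfl fun i _ => by ring
  linear_combination hL - hψ - hsplit - hswap + hWb + hS

end KeyAlg

section Comm
variable {n : ℕ} {m : Fin n → ℝ} {k : ℝ} {V : (Fin n → ℝ) → ℝ} {h : Phase n → ℝ}

lemma comm_XZ (hV : ContDiff ℝ (⊤ : ℕ∞) V)
    (hEuler : ∀ q : Fin n → ℝ, ∑ i, q i * dV V i q = k * V q)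
    (hh : ContDiff ℝ (⊤ : ℕ∞) h) (x : Phase n) :
    Xop m V (fun y => Zop k h y) x
      = Zop k (fun y => Xop m V h y) x + (1 - k / 2) * Xop m V h x := by
  have e1 : Xop m V (fun y => Zop k h y) x
      = ∑ i, (x.2 i / m i * (dq h i x + ∑ j, (x.1 j * fderiv ℝ (dq h j) x (E1 i)
            + k / 2 * (x.2 j * fderiv ℝ (dp h j) x (E1 i))))
          - dV V i x.1 * (k / 2 * dp h i x + ∑ j, (x.1 j * fderiv ℝ (dq h j) x (E2 i)
            + k / 2 * (x.2 j * fderiv ℝ (dp h j) x (E2 i))))) :=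
    Finset.sum_congr rfl fun i _ => by rw [dq_Zop hh i x, dp_Zop hh i x]
  have e2 : Zop k (fun y => Xop m V h y) x
      = ∑ i, (x.1 i * (∑ j, (x.2 j / m j * fderiv ℝ (dq h j) x (E1 i)
            - (fderiv ℝ (dV V j) x.1 (Pi.single i 1) * dp h j x
                + dV V j x.1 * fderiv ℝ (dp h j) x (E1 i))))
          + k / 2 * x.2 i * (dq h i x / m i
            + ∑ j, (x.2 j / m j * fderiv ℝ (dq h j) x (E2 i)
                - dV V j x.1 * fderiv ℝ (dp h j) x (E2 i)))) :=
    Finset.sum_congr rfl fun i _ => by rw [dq_Xop hV hh i x, dp_Xop hV hh i x]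
  have e3 : Xop m V h x = ∑ i, (x.2 i / m i * dq h i x - dV V i x.1 * dp h i x) := rfl
  rw [e1, e2, e3]
  exact key_algebra k m x.1 x.2 (fun i => dV V i x.1) (fun i => dq h i x) (fun i => dp h i x)
    (fun i j => fderiv ℝ (dV V j) x.1 (Pi.single i 1))
    (fun i j => fderiv ℝ (dq h j) x (E1 i)) (fun i j => fderiv ℝ (dp h j) x (E1 i))
    (fun i j => fderiv ℝ (dq h j) x (E2 i)) (fun i j => fderiv ℝ (dp h j) x (E2 i))
    (fun i j => D_symm hV x.1 (Pi.single j 1) (Pi.single i 1))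
    (fun i j => D_symm hh x (E1 j) (E1 i))
    (fun i j => D_symm hh x (E2 j) (E2 i))
    (fun i j => D_symm hh x (E2 j) (E1 i))
    (fun i => euler' hV hEuler x.1 i)

end Comm

section Main2
variable {n : ℕ} {m : Fin n → ℝ} {k : ℝ} {V : (Fin n → ℝ) → ℝ} {f g : Phase n → ℝ}

lemma bracketP_eq (m : Fin n → ℝ) (k : ℝ) (V : (Fin n → ℝ) → ℝ) (f g : Phase n → ℝ)
    (x : Phase n) :
    bracketP m k V f g x = Xop m V f x * Zop k g x - Zop k f x * Xop m V g x := by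
  have e1 : bracketP m k V f g x
      = (∑ i, ∑ j, (Acoef m i j x * (dq f i x * dq g j x)
            + Bcoef m k V i j x * (dq f i x * dp g j x)
            + Ccoef k V i j x * (dp f i x * dp g j x)))
        - ∑ i, ∑ j, Bcoef m k V i j x * (dp f j x * dq g i x) := by
    rw [← Finset.sum_sub_distrib]
    refine Finset.sum_congr rfl fun i _ => ?_
    rw [← Finset.sum_sub_distrib]
    exact Finset.sum_congr rfl fun j _ => by ring
  have e2 : ∑ i, ∑ j, Bcoef m k V i j x * (dp f j x * dq g i x)
      = ∑ i, ∑ j, Bcoef m k V j i x * (dp f i x * dq g j x) := Finset.sum_comm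
  have e3 : Xop m V f x * Zop k g x - Zop k f x * Xop m V g x
      = ∑ i, ∑ j, ((x.2 i / m i * dq f i x - dV V i x.1 * dp f i x)
            * (x.1 j * dq g j x + k / 2 * x.2 j * dp g j x)
          - (x.1 i * dq f i x + k / 2 * x.2 i * dp f i x)
            * (x.2 j / m j * dq g j x - dV V j x.1 * dp g j x)) := by
    rw [show Xop m V f x = ∑ i, (x.2 i / m i * dq f i x - dV V i x.1 * dp f i x) from rfl,
      show Zop k g x = ∑ i, (x.1 i * dq g i x + k / 2 * x.2 i * dp g i x) from rfl,
      show Zop k f x = ∑ i, (x.1 i * dq f i x + k / 2 * x.2 i * dp f i x) from rfl,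
      show Xop m V g x = ∑ i, (x.2 i / m i * dq g i x - dV V i x.1 * dp g i x) from rfl,
      Finset.sum_mul_sum, Finset.sum_mul_sum, ← Finset.sum_sub_distrib]
    refine Finset.sum_congr rfl fun i _ => ?_
    rw [← Finset.sum_sub_distrib]
  rw [e1, e2, e3, ← Finset.sum_sub_distrib]
  refine Finset.sum_congr rfl fun i _ => ?_
  rw [← Finset.sum_sub_distrib]
  refine Finset.sum_congr rfl fun j _ => ?_
  simp only [Acoef, Bcoef, Ccoef]
  ring

lemma contDiff_Xop (hV : ContDiff ℝ (⊤ : ℕ∞) V) (hf : ContDiff ℝ (⊤ : ℕ∞) f) :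
    ContDiff ℝ (⊤ : ℕ∞) (fun y => Xop m V f y) := by
  have e : (fun y => Xop m V f y)
      = fun y => ∑ i, (y.2 i / m i * dq f i y - dV V i y.1 * dp f i y) := rfl
  rw [e]
  refine ContDiff.sum fun i _ => ContDiff.sub (ContDiff.mul ?_ (contDiff_dq hf i))
    ((contDiff_dVfst hV i).mul (contDiff_dp hf i))
  have : (fun y : Phase n => y.2 i / m i) = fun y : Phase n => (m i)⁻¹ * y.2 i := by
    funext y; ring
  rw [this]
  exact contDiff_const.mul (coordp i).contDiff

lemma contDiff_Zop (hf : ContDiff ℝ (⊤ : ℕ∞) f) : ContDiff ℝ (⊤ : ℕ∞) (fun y => Zop k f y) := by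
  have e : (fun y => Zop k f y)
      = fun y => ∑ i, (y.1 i * dq f i y + k / 2 * y.2 i * dp f i y) := rfl
  rw [e]
  exact ContDiff.sum fun i _ => ContDiff.add ((coordq i).contDiff.mul (contDiff_dq hf i))
    ((contDiff_const.mul (coordp i).contDiff).mul (contDiff_dp hf i))

lemma Xop_comb {u w s t : Phase n → ℝ} (x : Phase n) (hu : DifferentiableAt ℝ u x)
    (hw : DifferentiableAt ℝ w x) (hs : DifferentiableAt ℝ s x)
    (ht : DifferentiableAt ℝ t x) :
    Xop m V (fun y => u y * w y - s y * t y) x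
      = (Xop m V u x * w x + u x * Xop m V w x)
        - (Xop m V s x * t x + s x * Xop m V t x) := by
  have hD : ∀ v : Phase n, fderiv ℝ (fun y => u y * w y - s y * t y) x v
      = (fderiv ℝ u x v * w x + u x * fderiv ℝ w x v)
        - (fderiv ℝ s x v * t x + s x * fderiv ℝ t x v) := by
    intro v
    rw [fderiv_sub_apply' (hu.fun_mul hw) (hs.fun_mul ht) v, fderiv_mul_apply hu hw v,
      fderiv_mul_apply hs ht v]
  have e0 : Xop m V (fun y => u y * w y - s y * t y) x
      = ∑ i, (x.2 i / m i * fderiv ℝ (fun y => u y * w y - s y * t y) x (E1 i)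
          - dV V i x.1 * fderiv ℝ (fun y => u y * w y - s y * t y) x (E2 i)) := rfl
  rw [e0]
  have e1 : ∀ i ∈ (Finset.univ : Finset (Fin n)),
      (x.2 i / m i * fderiv ℝ (fun y => u y * w y - s y * t y) x (E1 i)
          - dV V i x.1 * fderiv ℝ (fun y => u y * w y - s y * t y) x (E2 i))
      = (x.2 i / m i * ((fderiv ℝ u x (E1 i) * w x + u x * fderiv ℝ w x (E1 i))
            - (fderiv ℝ s x (E1 i) * t x + s x * fderiv ℝ t x (E1 i)))
          - dV V i x.1 * ((fderiv ℝ u x (E2 i) * w x + u x * fderiv ℝ w x (E2 i))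
            - (fderiv ℝ s x (E2 i) * t x + s x * fderiv ℝ t x (E2 i)))) :=
    fun i _ => by rw [hD (E1 i), hD (E2 i)]
  rw [Finset.sum_congr rfl e1,
    show Xop m V u x = ∑ i, (x.2 i / m i * fderiv ℝ u x (E1 i)
        - dV V i x.1 * fderiv ℝ u x (E2 i)) from rfl,
    show Xop m V w x = ∑ i, (x.2 i / m i * fderiv ℝ w x (E1 i)
        - dV V i x.1 * fderiv ℝ w x (E2 i)) from rfl,
    show Xop m V s x = ∑ i, (x.2 i / m i * fderiv ℝ s x (E1 i)
        - dV V i x.1 * fderiv ℝ s x (E2 i)) from rfl,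
    show Xop m V t x = ∑ i, (x.2 i / m i * fderiv ℝ t x (E1 i)
        - dV V i x.1 * fderiv ℝ t x (E2 i)) from rfl,
    Finset.sum_mul, Finset.sum_mul, Finset.mul_sum, Finset.mul_sum,
    ← Finset.sum_add_distrib, ← Finset.sum_add_distrib, ← Finset.sum_sub_distrib]
  exact Finset.sum_congr rfl fun i _ => by ring


/-- invariance of the bivector `P′` under the phase flow of `X`:
`X({f,g}′) = {Xf,g}′ + {f,Xg}′` for all smooth `f, g`. -/
theorem bracketP_invariant (n : ℕ) (m : Fin n → ℝ) (hm : ∀ i, 0 < m i) (k : ℝ)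
    (V : (Fin n → ℝ) → ℝ) (hV : ContDiff ℝ (⊤ : ℕ∞) V)
    (hEuler : ∀ q : Fin n → ℝ, ∑ i, q i * dV V i q = k * V q)
    (f g : Phase n → ℝ) (hf : ContDiff ℝ (⊤ : ℕ∞) f) (hg : ContDiff ℝ (⊤ : ℕ∞) g) :
    ∀ x : Phase n,
      Xop m V (bracketP m k V f g) x
        = bracketP m k V (fun y => Xop m V f y) g x
          + bracketP m k V f (fun y => Xop m V g y) x := by
  intro x
  have hbp : bracketP m k V f g
      = fun y => Xop m V f y * Zop k g y - Zop k f y * Xop m V g y :=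
    funext fun y => bracketP_eq m k V f g y
  rw [hbp, Xop_comb x ((contDiff_Xop hV hf).differentiable (by simp) x)
      ((contDiff_Zop hg).differentiable (by simp) x)
      ((contDiff_Zop hf).differentiable (by simp) x)
      ((contDiff_Xop hV hg).differentiable (by simp) x),
    bracketP_eq m k V (fun y => Xop m V f y) g x,
    bracketP_eq m k V f (fun y => Xop m V g y) x,
    comm_XZ hV hEuler hg x, comm_XZ hV hEuler hf x]
  ring
end Main2
end
end

section
/- For every smooth function f : ℝⁿ×ℝⁿ → ℝ one has {f, H}′ = k·H·{f, H} at every point of ℝⁿ×ℝⁿ; that is, the bivector P′ defining {·,·}′ satisfies P′dH = k·H·P dH, where P is the canonical Poisson bivector. -/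
open scoped BigOperators

noncomputable section

open ContinuousLinearMap in
lemma hasFDerivAt_Ham {n : ℕ} (m : Fin n → ℝ) (V : (Fin n → ℝ) → ℝ)
    (hV : Differentiable ℝ V) (x : Phase n) :
    HasFDerivAt (Ham m V)
      ((∑ i, (x.2 i / m i) • ((proj i : (Fin n → ℝ) →L[ℝ] ℝ).comp (snd ℝ (Fin n → ℝ) (Fin n → ℝ))))
        + (fderiv ℝ V x.1).comp (fst ℝ (Fin n → ℝ) (Fin n → ℝ))) x := by
  have h1 : HasFDerivAt (fun x : Phase n => V x.1)
      ((fderiv ℝ V x.1).comp (fst ℝ (Fin n → ℝ) (Fin n → ℝ))) x :=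
    (hV x.1).hasFDerivAt.comp x (hasFDerivAt_fst)
  have h2 : ∀ i : Fin n, HasFDerivAt (fun x : Phase n => x.2 i ^ 2 / (2 * m i))
      ((x.2 i / m i) • ((proj i : (Fin n → ℝ) →L[ℝ] ℝ).comp (snd ℝ (Fin n → ℝ) (Fin n → ℝ)))) x := by
    intro i
    have hp : HasFDerivAt (fun x : Phase n => x.2 i)
        ((proj i : (Fin n → ℝ) →L[ℝ] ℝ).comp (snd ℝ (Fin n → ℝ) (Fin n → ℝ))) x :=
      ((proj i : (Fin n → ℝ) →L[ℝ] ℝ).hasFDerivAt).comp x (hasFDerivAt_snd)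
    have h := (hp.mul hp).mul_const ((2 * m i)⁻¹)
    have heq : (2 * m i)⁻¹ • (x.2 i • (proj i : (Fin n → ℝ) →L[ℝ] ℝ).comp (snd ℝ (Fin n → ℝ) (Fin n → ℝ))
          + x.2 i • (proj i : (Fin n → ℝ) →L[ℝ] ℝ).comp (snd ℝ (Fin n → ℝ) (Fin n → ℝ)))
        = (x.2 i / m i) • ((proj i : (Fin n → ℝ) →L[ℝ] ℝ).comp (snd ℝ (Fin n → ℝ) (Fin n → ℝ))) := by
      rw [← two_smul ℝ (x.2 i • (proj i : (Fin n → ℝ) →L[ℝ] ℝ).comp (snd ℝ (Fin n → ℝ) (Fin n → ℝ))),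
        smul_smul, smul_smul]
      congr 1
      rw [mul_inv]
      ring
    rw [← heq]
    simp only [pow_two, div_eq_mul_inv]
    exact h
  exact (HasFDerivAt.fun_sum (fun i (_ : i ∈ Finset.univ) => h2 i)).add h1

lemma dq_Ham {n : ℕ} (m : Fin n → ℝ) (V : (Fin n → ℝ) → ℝ)
    (hV : Differentiable ℝ V) (i : Fin n) (x : Phase n) :
    dq (Ham m V) i x = dV V i x.1 := by
  rw [dq, (hasFDerivAt_Ham m V hV x).fderiv]
  simp [dV]

lemma dp_Ham {n : ℕ} (m : Fin n → ℝ) (V : (Fin n → ℝ) → ℝ)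
    (hV : Differentiable ℝ V) (i : Fin n) (x : Phase n) :
    dp (Ham m V) i x = x.2 i / m i := by
  rw [dp, (hasFDerivAt_Ham m V hV x).fderiv]
  simp [Pi.single_apply]

lemma key_alg {n : ℕ} (m p q a b d : Fin n → ℝ) (k W : ℝ)
    (hE : ∑ i, q i * d i = k * W) :
    ∑ i, ∑ j, ((p i * q j / m i - p j * q i / m j) * (a i * d j)
      + (k / (2 * m i) * (p i * p j) + q i * d j) * (a i * (p j / m j) - b j * d i)
      + k / 2 * (p i * d j - p j * d i) * (b i * (p j / m j)))
    = k * ((∑ i, p i ^ 2 / (2 * m i)) + W) * ∑ i, (a i * (p i / m i) - b i * d i) := by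
  have hinner : ∀ i : Fin n, ∑ j, ((p i * q j / m i - p j * q i / m j) * (a i * d j)
      + (k / (2 * m i) * (p i * p j) + q i * d j) * (a i * (p j / m j) - b j * d i)
      + k / 2 * (p i * d j - p j * d i) * (b i * (p j / m j)))
      = (p i * a i / m i) * (∑ j, q j * d j)
        - (q i * a i) * (∑ j, p j * d j / m j)
        + ((k / 2 * (p i * a i / m i)) * (∑ j, p j * p j / m j)
        - (k / 2 * (p i * d i / m i)) * (∑ j, p j * b j))
        + ((q i * a i) * (∑ j, p j * d j / m j)
        - (q i * d i) * (∑ j, d j * b j))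
        + ((k / 2 * (p i * b i)) * (∑ j, p j * d j / m j)
        - (k / 2 * (d i * b i)) * (∑ j, p j * p j / m j)) := by
    intro i
    have e : ∀ j : Fin n, ((p i * q j / m i - p j * q i / m j) * (a i * d j)
        + (k / (2 * m i) * (p i * p j) + q i * d j) * (a i * (p j / m j) - b j * d i)
        + k / 2 * (p i * d j - p j * d i) * (b i * (p j / m j)))
        = (p i * a i / m i) * (q j * d j)
          - (q i * a i) * (p j * d j / m j)
          + ((k / 2 * (p i * a i / m i)) * (p j * p j / m j)
          - (k / 2 * (p i * d i / m i)) * (p j * b j))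
          + ((q i * a i) * (p j * d j / m j)
          - (q i * d i) * (d j * b j))
          + ((k / 2 * (p i * b i)) * (p j * d j / m j)
          - (k / 2 * (d i * b i)) * (p j * p j / m j)) := by
      intro j
      simp only [div_eq_mul_inv, mul_inv]
      ring
    rw [Finset.sum_congr rfl (fun j _ => e j)]
    simp only [Finset.sum_add_distrib, Finset.sum_sub_distrib, ← Finset.mul_sum]
  rw [Finset.sum_congr rfl (fun i _ => hinner i)]
  simp only [hE]
  simp only [Finset.sum_add_distrib, Finset.sum_sub_distrib, ← Finset.sum_mul, ← Finset.mul_sum]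
  have hT : (∑ i, p i ^ 2 / (2 * m i)) = (∑ i, p i * p i / m i) / 2 := by
    rw [Finset.sum_div]
    refine Finset.sum_congr rfl fun i _ => ?_
    simp only [pow_two, div_eq_mul_inv, mul_inv]
    ring
  have h1 : (∑ i, a i * (p i / m i)) = ∑ i, p i * a i / m i :=
    Finset.sum_congr rfl fun i _ => by ring
  have h2 : (∑ i, b i * d i) = ∑ i, d i * b i :=
    Finset.sum_congr rfl fun i _ => by ring
  rw [hT, h1, h2]
  simp only [hE]
  ring

/-- `{f,H}′ = k·H·{f,H}` for every smooth `f`; i.e. the bivector `P′`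
satisfies `P′dH = k·H·P dH` with `P` the canonical Poisson bivector. -/
theorem bracketP_apply_H (n : ℕ) (m : Fin n → ℝ) (hm : ∀ i, 0 < m i) (k : ℝ)
    (V : (Fin n → ℝ) → ℝ) (hV : ContDiff ℝ (⊤ : ℕ∞) V)
    (hEuler : ∀ q : Fin n → ℝ, ∑ i, q i * dV V i q = k * V q)
    (f : Phase n → ℝ) (hf : ContDiff ℝ (⊤ : ℕ∞) f) :
    ∀ x : Phase n,
      bracketP m k V f (Ham m V) x = k * Ham m V x * bracketC f (Ham m V) x := by
  intro x
  have hVd : Differentiable ℝ V := hV.differentiable (by simp)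
  simp only [bracketP, bracketC, Acoef, Bcoef, Ccoef, Ham,
    dq_Ham m V hVd, dp_Ham m V hVd]
  exact key_alg m x.2 x.1 (fun i => dq f i x) (fun i => dp f i x)
    (fun i => dV V i x.1) k (V x.1) (hEuler x.1)
end
end

section
/- At every point x = (q,p) ∈ ℝⁿ×ℝⁿ, the 2n×2n antisymmetric matrix Π(x) of the bivector P′ has rank at most 2 (the bivector P′ is degenerate of rank 2). -/
open scoped BigOperators

noncomputable section

/-- The `2n×2n` antisymmetric matrix `Π(x)` of the bivector `P′`, with blocks
`Π_qq = A`, `Π_qp = B`, `Π_pq = −Bᵀ`, `Π_pp = C`. -/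
def PiMat {n : ℕ} (m : Fin n → ℝ) (k : ℝ) (V : (Fin n → ℝ) → ℝ) (x : Phase n) :
    Matrix (Fin n ⊕ Fin n) (Fin n ⊕ Fin n) ℝ :=
  Matrix.fromBlocks
    (Matrix.of fun i j => Acoef m i j x)
    (Matrix.of fun i j => Bcoef m k V i j x)
    (Matrix.of fun i j => - Bcoef m k V j i x)
    (Matrix.of fun i j => Ccoef k V i j x)

/-- at every point the matrix `Π(x)` of the bivector `P′` has rank at
most `2`. -/
theorem PiMat_rank_le_two (n : ℕ) (m : Fin n → ℝ) (hm : ∀ i, 0 < m i) (k : ℝ)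
    (V : (Fin n → ℝ) → ℝ) (hV : ContDiff ℝ (⊤ : ℕ∞) V)
    (hEuler : ∀ q : Fin n → ℝ, ∑ i, q i * dV V i q = k * V q) :
    ∀ x : Phase n, (PiMat m k V x).rank ≤ 2 := by
  intro x
  set u : (Fin n ⊕ Fin n) → ℝ := Sum.elim (fun i => x.2 i / m i) (fun i => - dV V i x.1)
  set v : (Fin n ⊕ Fin n) → ℝ := Sum.elim (fun i => x.1 i) (fun i => k / 2 * x.2 i)
  set M : Matrix (Fin n ⊕ Fin n) (Fin 2) ℝ := Matrix.of fun a b => if b = 0 then u a else v a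
  set N : Matrix (Fin 2) (Fin n ⊕ Fin n) ℝ := Matrix.of fun b a => if b = 0 then v a else - u a
  have hMN : PiMat m k V x = M * N := by
    ext a b
    have : (M * N) a b = u a * v b - v a * u b := by
      simp [Matrix.mul_apply, Fin.sum_univ_two, M, N]
      ring
    rw [this]
    rcases a with i | i <;> rcases b with j | j <;>
      simp [PiMat, Acoef, Bcoef, Ccoef, u, v] <;> field_simp <;> ring
  calc (PiMat m k V x).rank = (M * N).rank := by rw [hMN]
    _ ≤ M.rank := Matrix.rank_mul_le_left M N
    _ ≤ Fintype.card (Fin 2) := Matrix.rank_le_card_width M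
    _ = 2 := by simp
end
end

section
/- Assume k ≠ 2 and k ≠ −2. Then the bracket {f,g}^ = (1 − k/2)·H·{f,g} + {f,g}′ satisfies the Jacobi identity: for all smooth functions f, g, h : ℝⁿ×ℝⁿ → ℝ, {{f,g}^, h}^ + {{g,h}^, f}^ + {{h,f}^, g}^ = 0 at every point of ℝⁿ×ℝⁿ. -/
open scoped BigOperators

noncomputable section

/-- The bracket `{f,g}^ = (1 − k/2)·H·{f,g} + {f,g}′` of the bivector
`P̂ = (1 − k/2)H·P + P′`. -/
def bracketHat {n : ℕ} (m : Fin n → ℝ) (k : ℝ) (V : (Fin n → ℝ) → ℝ)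
    (f g : Phase n → ℝ) (x : Phase n) : ℝ :=
  (1 - k / 2) * Ham m V x * bracketC f g x + bracketP m k V f g x

namespace BHJ

variable {n : ℕ}

/-- Smooth real function on phase space. -/
abbrev Sm (u : Phase n → ℝ) : Prop := ContDiff ℝ (⊤ : ℕ∞) u

lemma Sm.dAt {u : Phase n → ℝ} (hu : Sm u) {x : Phase n} : DifferentiableAt ℝ u x :=
  (hu.differentiable (by simp)).differentiableAt

/-- Directional derivative. -/
def dd (w : Phase n) (u : Phase n → ℝ) (x : Phase n) : ℝ := fderiv ℝ u x w

lemma dq_eq (f : Phase n → ℝ) (i : Fin n) (x : Phase n) :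
    dq f i x = dd (Pi.single i 1, 0) f x := rfl

lemma dp_eq (f : Phase n → ℝ) (i : Fin n) (x : Phase n) :
    dp f i x = dd (0, Pi.single i 1) f x := rfl

section ddRules

variable {u v : Phase n → ℝ} {x w : Phase n}

lemma dd_add (hu : DifferentiableAt ℝ u x) (hv : DifferentiableAt ℝ v x) :
    dd w (fun y => u y + v y) x = dd w u x + dd w v x := by
  simp [dd, fderiv_fun_add hu hv]

lemma dd_sub (hu : DifferentiableAt ℝ u x) (hv : DifferentiableAt ℝ v x) :
    dd w (fun y => u y - v y) x = dd w u x - dd w v x := by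
  simp [dd, fderiv_fun_sub hu hv]

lemma dd_neg : dd w (fun y => -u y) x = -dd w u x := by
  simp [dd, fderiv_neg]

lemma dd_mul (hu : DifferentiableAt ℝ u x) (hv : DifferentiableAt ℝ v x) :
    dd w (fun y => u y * v y) x = u x * dd w v x + v x * dd w u x := by
  simp [dd, fderiv_fun_mul hu hv]

lemma dd_const_mul (hu : DifferentiableAt ℝ u x) (c : ℝ) :
    dd w (fun y => c * u y) x = c * dd w u x := by
  simp [dd, fderiv_const_mul hu c]

lemma dd_mul_const (hu : DifferentiableAt ℝ u x) (c : ℝ) :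
    dd w (fun y => u y * c) x = dd w u x * c := by
  simp [dd, fderiv_mul_const hu c]; ring

lemma dd_const (c : ℝ) : dd w (fun _ => c) x = 0 := by
  simp [dd]

lemma dd_sum {ι : Type*} {s : Finset ι} {U : ι → Phase n → ℝ}
    (hU : ∀ i ∈ s, DifferentiableAt ℝ (U i) x) :
    dd w (fun y => ∑ i ∈ s, U i y) x = ∑ i ∈ s, dd w (U i) x := by
  simp [dd, fderiv_fun_sum hU]

lemma Sm.dd_sm {u : Phase n → ℝ} (hu : Sm u) (w : Phase n) :
    Sm (fun y => dd w u y) :=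
  (hu.fderiv_right (by simp)).clm_apply contDiff_const

lemma dd_comm {u : Phase n → ℝ} (hu : Sm u) (v w : Phase n) (x : Phase n) :
    dd v (fun y => dd w u y) x = dd w (fun y => dd v u y) x := by
  have hd : DifferentiableAt ℝ (fderiv ℝ u) x :=
    ((hu.fderiv_right (m := 1) (WithTop.coe_le_coe.mpr le_top)).differentiable (by simp)).differentiableAt
  have h1 : ∀ (z v' : Phase n), dd v' (fun y => dd z u y) x
      = fderiv ℝ (fderiv ℝ u) x v' z := by
    intro z v'
    show fderiv ℝ (fun y => (fderiv ℝ u y) z) x v' = _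
    rw [fderiv_clm_apply hd (differentiableAt_const z)]
    simp
  rw [h1, h1]
  exact (hu.contDiffAt.isSymmSndFDerivAt (by simp; exact WithTop.coe_le_coe.mpr le_top)) v w

end ddRules

end BHJ

namespace BHJ

variable {n : ℕ}

section coords

/-- q-coordinate as a continuous linear map. -/
def cq (i : Fin n) : Phase n →L[ℝ] ℝ :=
  (ContinuousLinearMap.proj i).comp (ContinuousLinearMap.fst ℝ (Fin n → ℝ) (Fin n → ℝ))

/-- p-coordinate as a continuous linear map. -/
def cp (i : Fin n) : Phase n →L[ℝ] ℝ :=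
  (ContinuousLinearMap.proj i).comp (ContinuousLinearMap.snd ℝ (Fin n → ℝ) (Fin n → ℝ))

lemma Sm_q (i : Fin n) : Sm (fun y : Phase n => y.1 i) := (cq i).contDiff

lemma Sm_p (i : Fin n) : Sm (fun y : Phase n => y.2 i) := (cp i).contDiff

lemma dd_q (w x : Phase n) (i : Fin n) : dd w (fun y : Phase n => y.1 i) x = w.1 i := by
  show fderiv ℝ (⇑(cq i)) x w = w.1 i
  rw [ContinuousLinearMap.fderiv]; rfl

lemma dd_p (w x : Phase n) (i : Fin n) : dd w (fun y : Phase n => y.2 i) x = w.2 i := by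
  show fderiv ℝ (⇑(cp i)) x w = w.2 i
  rw [ContinuousLinearMap.fderiv]; rfl

variable {V : (Fin n → ℝ) → ℝ}

lemma Sm_W (hV : ContDiff ℝ (⊤ : ℕ∞) V) : Sm (fun y : Phase n => V y.1) :=
  hV.comp contDiff_fst

lemma dd_W (hV : ContDiff ℝ (⊤ : ℕ∞) V) (w x : Phase n) :
    dd w (fun y : Phase n => V y.1) x = fderiv ℝ V x.1 w.1 := by
  have h : (fun y : Phase n => V y.1)
      = V ∘ ⇑(ContinuousLinearMap.fst ℝ (Fin n → ℝ) (Fin n → ℝ)) := rfl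
  show fderiv ℝ (fun y : Phase n => V y.1) x w = _
  rw [h, fderiv_comp x (hV.differentiable (by simp)).differentiableAt
    (ContinuousLinearMap.fst ℝ (Fin n → ℝ) (Fin n → ℝ)).differentiableAt,
    ContinuousLinearMap.fderiv]
  rfl

lemma dq_W (hV : ContDiff ℝ (⊤ : ℕ∞) V) (i : Fin n) (x : Phase n) :
    dq (fun y : Phase n => V y.1) i x = dV V i x.1 := by
  rw [dq_eq, dd_W hV]; rfl

lemma dp_W (hV : ContDiff ℝ (⊤ : ℕ∞) V) (i : Fin n) (x : Phase n) :
    dp (fun y : Phase n => V y.1) i x = 0 := by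
  rw [dp_eq, dd_W hV]
  show fderiv ℝ V x.1 0 = 0
  simp

lemma Sm_dV (hV : ContDiff ℝ (⊤ : ℕ∞) V) (i : Fin n) : Sm (fun y : Phase n => dV V i y.1) := by
  have h : (fun y : Phase n => dV V i y.1)
      = fun y => dd (Pi.single i 1, 0) (fun z : Phase n => V z.1) y := by
    funext y
    rw [← dq_eq, dq_W hV]
  rw [h]
  exact (Sm_W hV).dd_sm _

end coords

section ham

variable {V : (Fin n → ℝ) → ℝ} {m : Fin n → ℝ}

lemma Sm_Ham (hV : ContDiff ℝ (⊤ : ℕ∞) V) : Sm (Ham m V) := by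
  have h : Ham m V = fun x : Phase n => (∑ i, x.2 i ^ 2 / (2 * m i)) + V x.1 := rfl
  rw [h]
  exact (ContDiff.sum fun i _ => ((Sm_p i).pow 2).div_const _).add (Sm_W hV)

lemma dd_Ham (hV : ContDiff ℝ (⊤ : ℕ∞) V) (w x : Phase n) :
    dd w (Ham m V) x = (∑ i, x.2 i * w.2 i / m i) + fderiv ℝ V x.1 w.1 := by
  have h : Ham m V = fun x : Phase n
      => (∑ i, (fun y : Phase n => y.2 i * y.2 i * (2 * m i)⁻¹) x) + V x.1 := by
    funext y; unfold Ham; congr 1; apply Finset.sum_congr rfl; intro i _; ring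
  rw [h, dd_add (by fun_prop) (Sm_W hV).dAt, dd_W hV,
    dd_sum (fun i _ => by fun_prop)]
  congr 1
  apply Finset.sum_congr rfl; intro i _
  rw [dd_mul_const (by fun_prop), dd_mul (Sm_p i).dAt (Sm_p i).dAt, dd_p, mul_inv]
  ring

lemma dq_Ham (hV : ContDiff ℝ (⊤ : ℕ∞) V) (i : Fin n) (x : Phase n) :
    dq (Ham m V) i x = dV V i x.1 := by
  rw [dq_eq, dd_Ham hV]
  show (∑ j, x.2 j * (0 : Fin n → ℝ) j / m j) + fderiv ℝ V x.1 (Pi.single i 1) = _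
  simp [dV]

lemma dp_Ham (hV : ContDiff ℝ (⊤ : ℕ∞) V) (i : Fin n) (x : Phase n) :
    dp (Ham m V) i x = x.2 i / m i := by
  rw [dp_eq, dd_Ham hV]
  have h0 : fderiv ℝ V x.1 ((0 : Fin n → ℝ), (Pi.single i 1 : Fin n → ℝ)).1 = 0 := by simp
  rw [h0, add_zero, Finset.sum_eq_single i]
  · simp
  · intro j _ hj
    have h1 : ((0 : Fin n → ℝ), (Pi.single i 1 : Fin n → ℝ)).2 j = 0 := by simp [Pi.single_eq_of_ne hj]
    rw [h1]
    simp
  · simp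

end ham

end BHJ

namespace BHJ

variable {n : ℕ}

section dqdp

variable {u v : Phase n → ℝ} {x : Phase n} {i : Fin n}

lemma dq_add (hu : Sm u) (hv : Sm v) :
    dq (fun y => u y + v y) i x = dq u i x + dq v i x := by
  rw [dq_eq, dd_add hu.dAt hv.dAt, ← dq_eq, ← dq_eq]

lemma dp_add (hu : Sm u) (hv : Sm v) :
    dp (fun y => u y + v y) i x = dp u i x + dp v i x := by
  rw [dp_eq, dd_add hu.dAt hv.dAt, ← dp_eq, ← dp_eq]

lemma dq_sub (hu : Sm u) (hv : Sm v) :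
    dq (fun y => u y - v y) i x = dq u i x - dq v i x := by
  rw [dq_eq, dd_sub hu.dAt hv.dAt, ← dq_eq, ← dq_eq]

lemma dp_sub (hu : Sm u) (hv : Sm v) :
    dp (fun y => u y - v y) i x = dp u i x - dp v i x := by
  rw [dp_eq, dd_sub hu.dAt hv.dAt, ← dp_eq, ← dp_eq]

lemma dq_mul (hu : Sm u) (hv : Sm v) :
    dq (fun y => u y * v y) i x = u x * dq v i x + v x * dq u i x := by
  rw [dq_eq, dd_mul hu.dAt hv.dAt, ← dq_eq, ← dq_eq]

lemma dp_mul (hu : Sm u) (hv : Sm v) :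
    dp (fun y => u y * v y) i x = u x * dp v i x + v x * dp u i x := by
  rw [dp_eq, dd_mul hu.dAt hv.dAt, ← dp_eq, ← dp_eq]

lemma dq_const_mul (hu : Sm u) (c : ℝ) :
    dq (fun y => c * u y) i x = c * dq u i x := by
  rw [dq_eq, dd_const_mul hu.dAt, ← dq_eq]

lemma dp_const_mul (hu : Sm u) (c : ℝ) :
    dp (fun y => c * u y) i x = c * dp u i x := by
  rw [dp_eq, dd_const_mul hu.dAt, ← dp_eq]

lemma dq_sum {N : ℕ} {U : Fin N → Phase n → ℝ} (hU : ∀ j, Sm (U j)) :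
    dq (fun y => ∑ j, U j y) i x = ∑ j, dq (U j) i x := by
  rw [dq_eq, dd_sum (fun j _ => (hU j).dAt)]
  simp [dq_eq]

lemma dp_sum {N : ℕ} {U : Fin N → Phase n → ℝ} (hU : ∀ j, Sm (U j)) :
    dp (fun y => ∑ j, U j y) i x = ∑ j, dp (U j) i x := by
  rw [dp_eq, dd_sum (fun j _ => (hU j).dAt)]
  simp [dp_eq]

lemma Sm_dq (hu : Sm u) (i : Fin n) : Sm (fun y => dq u i y) := hu.dd_sm _

lemma Sm_dp (hu : Sm u) (i : Fin n) : Sm (fun y => dp u i y) := hu.dd_sm _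

/-- Clairaut instances. -/
lemma dqq_comm (hu : Sm u) (i j : Fin n) (x : Phase n) :
    dq (fun y => dq u i y) j x = dq (fun y => dq u j y) i x := by
  simp only [dq_eq]
  exact dd_comm hu _ _ x

lemma dpp_comm (hu : Sm u) (i j : Fin n) (x : Phase n) :
    dp (fun y => dp u i y) j x = dp (fun y => dp u j y) i x := by
  simp only [dp_eq]
  exact dd_comm hu _ _ x

/-- `∂pⱼ ∂qᵢ u = ∂qᵢ ∂pⱼ u` in the form used below. -/
lemma dpq_comm (hu : Sm u) (i j : Fin n) (x : Phase n) :
    dp (fun y => dq u i y) j x = dq (fun y => dp u j y) i x := by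
  simp only [dq_eq, dp_eq]
  exact dd_comm hu _ _ x

end dqdp

section Lop

/-- Generic first-order operator with (frozen) coefficients. -/
def Lop (α β : Fin n → ℝ) (u : Phase n → ℝ) (x : Phase n) : ℝ :=
  ∑ i, (α i * dq u i x + β i * dp u i x)

variable {α β : Fin n → ℝ} {u v : Phase n → ℝ} {x : Phase n}

lemma Lop_add (hu : Sm u) (hv : Sm v) :
    Lop α β (fun y => u y + v y) x = Lop α β u x + Lop α β v x := by
  unfold Lop
  rw [← Finset.sum_add_distrib]
  refine Finset.sum_congr rfl fun i _ => ?_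
  rw [dq_add hu hv, dp_add hu hv]; ring

lemma Lop_sub (hu : Sm u) (hv : Sm v) :
    Lop α β (fun y => u y - v y) x = Lop α β u x - Lop α β v x := by
  unfold Lop
  rw [← Finset.sum_sub_distrib]
  refine Finset.sum_congr rfl fun i _ => ?_
  rw [dq_sub hu hv, dp_sub hu hv]; ring

lemma Lop_mul (hu : Sm u) (hv : Sm v) :
    Lop α β (fun y => u y * v y) x = u x * Lop α β v x + v x * Lop α β u x := by
  unfold Lop
  rw [Finset.mul_sum, Finset.mul_sum, ← Finset.sum_add_distrib]
  refine Finset.sum_congr rfl fun i _ => ?_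
  rw [dq_mul hu hv, dp_mul hu hv]; ring

lemma Lop_const_mul (hu : Sm u) (c : ℝ) :
    Lop α β (fun y => c * u y) x = c * Lop α β u x := by
  unfold Lop
  rw [Finset.mul_sum]
  refine Finset.sum_congr rfl fun i _ => ?_
  rw [dq_const_mul hu, dp_const_mul hu]; ring

end Lop

section ops

variable {m : Fin n → ℝ} {k : ℝ} {V : (Fin n → ℝ) → ℝ}

/-- The scaling (dilation) vector field `Z = Σᵢ qᵢ ∂qᵢ + (k/2) pᵢ ∂pᵢ`. -/
def Zop (k : ℝ) (u : Phase n → ℝ) (x : Phase n) : ℝ :=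
  ∑ i, (x.1 i * dq u i x + k / 2 * x.2 i * dp u i x)

lemma Xop_eq_Lop (u : Phase n → ℝ) (x : Phase n) :
    Xop m V u x = Lop (fun i => x.2 i / m i) (fun i => -dV V i x.1) u x := by
  unfold Xop Lop
  refine Finset.sum_congr rfl fun i _ => ?_
  ring

lemma Zop_eq_Lop (u : Phase n → ℝ) (x : Phase n) :
    Zop k u x = Lop (fun i => x.1 i) (fun i => k / 2 * x.2 i) u x := by
  unfold Zop Lop
  refine Finset.sum_congr rfl fun i _ => ?_
  ring

lemma bC_eq_Lop (u w : Phase n → ℝ) (x : Phase n) :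
    bracketC u w x = Lop (fun i => dp w i x) (fun i => -dq w i x) u x := by
  unfold bracketC Lop
  refine Finset.sum_congr rfl fun i _ => ?_
  ring

lemma bC_antisymm (u w : Phase n → ℝ) (x : Phase n) :
    bracketC u w x = -bracketC w u x := by
  unfold bracketC
  rw [← Finset.sum_neg_distrib]
  refine Finset.sum_congr rfl fun i _ => ?_
  ring

lemma Sm_X (hV : ContDiff ℝ (⊤ : ℕ∞) V) {u : Phase n → ℝ} (hu : Sm u) :
    Sm (fun y => Xop m V u y) := by
  have h : (fun y => Xop m V u y)
      = fun y => ∑ i, (y.2 i / m i * dq u i y - dV V i y.1 * dp u i y) := rfl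
  rw [h]
  exact ContDiff.sum fun i _ =>
    (((Sm_p i).div_const _).mul (Sm_dq hu i)).sub ((Sm_dV hV i).mul (Sm_dp hu i))

lemma Sm_Z {u : Phase n → ℝ} (hu : Sm u) : Sm (fun y => Zop k u y) := by
  have h : (fun y => Zop k u y)
      = fun y => ∑ i, (y.1 i * dq u i y + (k / 2) * y.2 i * dp u i y) := rfl
  rw [h]
  exact ContDiff.sum fun i _ =>
    ((Sm_q i).mul (Sm_dq hu i)).add (((contDiff_const.mul (Sm_p i))).mul (Sm_dp hu i))

lemma Sm_bC {u v : Phase n → ℝ} (hu : Sm u) (hv : Sm v) :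
    Sm (fun y => bracketC u v y) := by
  have h : (fun y => bracketC u v y)
      = fun y => ∑ i, (dq u i y * dp v i y - dp u i y * dq v i y) := rfl
  rw [h]
  exact ContDiff.sum fun i _ =>
    ((Sm_dq hu i).mul (Sm_dp hv i)).sub ((Sm_dp hu i).mul (Sm_dq hv i))

end ops

end BHJ

namespace BHJ

variable {n : ℕ} {m : Fin n → ℝ} {k : ℝ} {V : (Fin n → ℝ) → ℝ}

/-- The bivector `P′` is `X ∧ Z`. -/
lemma bracketP_eq (f g : Phase n → ℝ) (x : Phase n) :
    bracketP m k V f g x = Xop m V f x * Zop k g x - Zop k f x * Xop m V g x := by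
  unfold bracketP
  have h1 : ∀ i j : Fin n, Acoef m i j x * (dq f i x * dq g j x)
      + Bcoef m k V i j x * (dq f i x * dp g j x - dp f j x * dq g i x)
      + Ccoef k V i j x * (dp f i x * dp g j x)
      = (Acoef m i j x * (dq f i x * dq g j x) + Bcoef m k V i j x * (dq f i x * dp g j x)
          + Ccoef k V i j x * (dp f i x * dp g j x))
        - Bcoef m k V i j x * (dp f j x * dq g i x) := by
    intro i j; ring
  simp only [h1, Finset.sum_sub_distrib]
  rw [show (∑ i, ∑ j, Bcoef m k V i j x * (dp f j x * dq g i x))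
      = ∑ j, ∑ i, Bcoef m k V i j x * (dp f j x * dq g i x) from Finset.sum_comm]
  simp only [← Finset.sum_sub_distrib]
  unfold Xop Zop
  rw [Finset.sum_mul_sum, Finset.sum_mul_sum, ← Finset.sum_sub_distrib]
  refine Finset.sum_congr rfl fun i _ => ?_
  rw [← Finset.sum_sub_distrib]
  exact Finset.sum_congr rfl fun j _ => by unfold Acoef Bcoef Ccoef; ring

lemma bC_Ham_right (hV : ContDiff ℝ (⊤ : ℕ∞) V) (u : Phase n → ℝ) (x : Phase n) :
    bracketC u (Ham m V) x = Xop m V u x := by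
  unfold bracketC Xop
  refine Finset.sum_congr rfl fun i _ => ?_
  rw [dq_Ham hV, dp_Ham hV]
  ring

lemma bC_Ham_left (hV : ContDiff ℝ (⊤ : ℕ∞) V) (u : Phase n → ℝ) (x : Phase n) :
    bracketC (Ham m V) u x = -Xop m V u x := by
  rw [bC_antisymm, bC_Ham_right hV]

lemma Xop_Ham (hV : ContDiff ℝ (⊤ : ℕ∞) V) (x : Phase n) :
    Xop m V (Ham m V) x = 0 := by
  unfold Xop
  rw [Finset.sum_eq_zero]
  intro i _
  rw [dq_Ham hV, dp_Ham hV]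
  ring

lemma Zop_Ham (hV : ContDiff ℝ (⊤ : ℕ∞) V)
    (hEuler : ∀ q : Fin n → ℝ, ∑ i, q i * dV V i q = k * V q) (x : Phase n) :
    Zop k (Ham m V) x = k * Ham m V x := by
  unfold Zop
  have h1 : ∀ i : Fin n, x.1 i * dq (Ham m V) i x + k / 2 * x.2 i * dp (Ham m V) i x
      = x.1 i * dV V i x.1 + k * (x.2 i ^ 2 / (2 * m i)) := by
    intro i
    rw [dq_Ham hV, dp_Ham hV]
    simp only [div_eq_mul_inv, mul_inv]
    ring
  simp only [h1]
  rw [Finset.sum_add_distrib, hEuler, ← Finset.mul_sum]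
  unfold Ham
  ring

end BHJ

namespace BHJ

variable {n : ℕ} {m : Fin n → ℝ} {k : ℝ} {V : (Fin n → ℝ) → ℝ}

/-- Purely algebraic core of the canonical Jacobi identity. -/
lemma jac_alg (N : ℕ) (fq fp gq gp hq hp : Fin N → ℝ)
    (Qf Pf Mf Qg Pg Mg Qh Ph Mh : Fin N → Fin N → ℝ)
    (sQf : ∀ i j, Qf i j = Qf j i) (sPf : ∀ i j, Pf i j = Pf j i)
    (sQg : ∀ i j, Qg i j = Qg j i) (sPg : ∀ i j, Pg i j = Pg j i)
    (sQh : ∀ i j, Qh i j = Qh j i) (sPh : ∀ i j, Ph i j = Ph j i) :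
    (∑ j, ∑ i, ((fq i * Mg i j + gp i * Qf i j - fp i * Qg i j - gq i * Mf i j) * hp j
      - (fq i * Pg i j + gp i * Mf j i - fp i * Mg j i - gq i * Pf i j) * hq j))
    + (∑ j, ∑ i, ((gq i * Mh i j + hp i * Qg i j - gp i * Qh i j - hq i * Mg i j) * fp j
      - (gq i * Ph i j + hp i * Mg j i - gp i * Mh j i - hq i * Pg i j) * fq j))
    + (∑ j, ∑ i, ((hq i * Mf i j + fp i * Qh i j - hp i * Qf i j - fq i * Mh i j) * gp j
      - (hq i * Pf i j + fp i * Mh j i - hp i * Mf j i - fq i * Ph i j) * gq j)) = 0 := by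
  simp only [← Finset.sum_add_distrib]
  have half : ∀ S : ℝ, S + S = 0 → S = 0 := fun S h => by linarith
  apply half
  nth_rewrite 1 [Finset.sum_comm]
  rw [← Finset.sum_add_distrib]
  refine Finset.sum_eq_zero fun a _ => ?_
  rw [← Finset.sum_add_distrib]
  refine Finset.sum_eq_zero fun b _ => ?_
  rw [sQf b a, sPf b a, sQg b a, sPg b a, sQh b a, sPh b a]
  ring

/-- Expansion of an iterated canonical bracket. -/
lemma bC_bC_expand {u v w : Phase n → ℝ} (hu : Sm u) (hv : Sm v) (hw : Sm w) (x : Phase n) :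
    bracketC (fun y => bracketC u v y) w x
    = ∑ j, ∑ i,
      ((dq u i x * dq (fun y => dp v i y) j x + dp v i x * dq (fun y => dq u i y) j x
          - dp u i x * dq (fun y => dq v i y) j x - dq v i x * dq (fun y => dp u i y) j x)
          * dp w j x
        - (dq u i x * dp (fun y => dp v i y) j x + dp v i x * dq (fun y => dp u j y) i x
          - dp u i x * dq (fun y => dp v j y) i x - dq v i x * dp (fun y => dp u i y) j x)
          * dq w j x) := by
  rw [show bracketC (fun y => bracketC u v y) w x
      = ∑ j, (dq (fun y => bracketC u v y) j x * dp w j x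
        - dp (fun y => bracketC u v y) j x * dq w j x) from rfl]
  refine Finset.sum_congr rfl fun j _ => ?_
  have hsm : ∀ i : Fin n, Sm (fun y => dq u i y * dp v i y - dp u i y * dq v i y) :=
    fun i => ((Sm_dq hu i).mul (Sm_dp hv i)).sub ((Sm_dp hu i).mul (Sm_dq hv i))
  have hb : (fun y => bracketC u v y)
      = fun y => ∑ i, (dq u i y * dp v i y - dp u i y * dq v i y) := rfl
  rw [hb, dq_sum (fun i => hsm i), dp_sum (fun i => hsm i), Finset.sum_mul, Finset.sum_mul,
    ← Finset.sum_sub_distrib]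
  refine Finset.sum_congr rfl fun i _ => ?_
  rw [dq_sub ((Sm_dq hu i).mul (Sm_dp hv i)) ((Sm_dp hu i).mul (Sm_dq hv i)),
    dp_sub ((Sm_dq hu i).mul (Sm_dp hv i)) ((Sm_dp hu i).mul (Sm_dq hv i)),
    dq_mul (Sm_dq hu i) (Sm_dp hv i), dq_mul (Sm_dp hu i) (Sm_dq hv i),
    dp_mul (Sm_dq hu i) (Sm_dp hv i), dp_mul (Sm_dp hu i) (Sm_dq hv i),
    dpq_comm hu i j x, dpq_comm hv i j x]
  ring

/-- Canonical Jacobi identity. -/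
lemma bC_jacobi {u v w : Phase n → ℝ} (hu : Sm u) (hv : Sm v) (hw : Sm w) (x : Phase n) :
    bracketC (fun y => bracketC u v y) w x + bracketC (fun y => bracketC v w y) u x
      + bracketC (fun y => bracketC w u y) v x = 0 := by
  rw [bC_bC_expand hu hv hw x, bC_bC_expand hv hw hu x, bC_bC_expand hw hu hv x]
  exact jac_alg n (fun i => dq u i x) (fun i => dp u i x) (fun i => dq v i x)
    (fun i => dp v i x) (fun i => dq w i x) (fun i => dp w i x)
    (fun i j => dq (fun y => dq u i y) j x) (fun i j => dp (fun y => dp u i y) j x)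
    (fun i j => dq (fun y => dp u i y) j x)
    (fun i j => dq (fun y => dq v i y) j x) (fun i j => dp (fun y => dp v i y) j x)
    (fun i j => dq (fun y => dp v i y) j x)
    (fun i j => dq (fun y => dq w i y) j x) (fun i j => dp (fun y => dp w i y) j x)
    (fun i j => dq (fun y => dp w i y) j x)
    (fun i j => dqq_comm hu i j x) (fun i j => dpp_comm hu i j x)
    (fun i j => dqq_comm hv i j x) (fun i j => dpp_comm hv i j x)
    (fun i j => dqq_comm hw i j x) (fun i j => dpp_comm hw i j x)

lemma bC_neg_left (z v : Phase n → ℝ) (x : Phase n) :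
    bracketC (fun y => -z y) v x = -bracketC z v x := by
  unfold bracketC
  rw [← Finset.sum_neg_distrib]
  refine Finset.sum_congr rfl fun i _ => ?_
  simp only [dq_eq, dp_eq, dd_neg]
  ring

/-- `X` is a Poisson vector field. -/
lemma X_poisson (hV : ContDiff ℝ (⊤ : ℕ∞) V) {u v : Phase n → ℝ} (hu : Sm u) (hv : Sm v)
    (x : Phase n) :
    Xop m V (fun y => bracketC u v y) x
      = bracketC (fun y => Xop m V u y) v x - bracketC (fun y => Xop m V v y) u x := by
  have J := bC_jacobi hu hv (Sm_Ham (m := m) hV) x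
  rw [bC_Ham_right hV (fun y => bracketC u v y) x] at J
  rw [show (fun y => bracketC v (Ham m V) y) = fun y => Xop m V v y from
      funext fun y => bC_Ham_right hV v y] at J
  rw [show (fun y => bracketC (Ham m V) u y) = fun y => -Xop m V u y from
      funext fun y => bC_Ham_left hV u y] at J
  rw [bC_neg_left] at J
  linarith

end BHJ

namespace BHJ

variable {n : ℕ} {m : Fin n → ℝ} {k : ℝ} {V : (Fin n → ℝ) → ℝ}

section coordvals

variable (i j : Fin n) (x : Phase n)

lemma dq_q : dq (fun y : Phase n => y.1 j) i x = (Pi.single i 1 : Fin n → ℝ) j := by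
  rw [dq_eq, dd_q]

lemma dq_p : dq (fun y : Phase n => y.2 j) i x = 0 := by
  rw [dq_eq, dd_p]; rfl

lemma dp_q : dp (fun y : Phase n => y.1 j) i x = 0 := by
  rw [dp_eq, dd_q]; rfl

lemma dp_p : dp (fun y : Phase n => y.2 j) i x = (Pi.single i 1 : Fin n → ℝ) j := by
  rw [dp_eq, dd_p]

lemma dq_pdiv : dq (fun y : Phase n => y.2 j / m j) i x = 0 := by
  have h : (fun y : Phase n => y.2 j / m j) = fun y => y.2 j * (m j)⁻¹ := by
    funext y; rw [div_eq_mul_inv]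
  rw [h, dq_eq, dd_mul_const (Sm_p j).dAt, ← dq_eq, dq_p]
  ring

lemma dp_pdiv : dp (fun y : Phase n => y.2 j / m j) i x = (Pi.single i 1 : Fin n → ℝ) j / m j := by
  have h : (fun y : Phase n => y.2 j / m j) = fun y => y.2 j * (m j)⁻¹ := by
    funext y; rw [div_eq_mul_inv]
  rw [h, dp_eq, dd_mul_const (Sm_p j).dAt, ← dp_eq, dp_p, div_eq_mul_inv]

lemma sum_single_mul (c : Fin n → ℝ) (i : Fin n) :
    ∑ j, c j * (Pi.single i 1 : Fin n → ℝ) j = c i := by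
  rw [Finset.sum_eq_single i]
  · simp
  · intro j _ hj
    rw [show (Pi.single i 1 : Fin n → ℝ) j = 0 from by simp [Pi.single_eq_of_ne hj]]
    ring
  · simp

lemma sum_single_div (c : Fin n → ℝ) (i : Fin n) :
    ∑ j, c j * ((Pi.single i 1 : Fin n → ℝ) j / m j) = c i / m i := by
  rw [Finset.sum_eq_single i]
  · simp [div_eq_mul_inv]
  · intro j _ hj
    rw [show (Pi.single i 1 : Fin n → ℝ) j = 0 from by simp [Pi.single_eq_of_ne hj]]
    simp
  · simp

lemma dpdqW_zero (hV : ContDiff ℝ (⊤ : ℕ∞) V) :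
    dp (fun y => dq (fun z : Phase n => V z.1) j y) i x = 0 := by
  rw [dpq_comm (Sm_W hV) j i x,
    show (fun y => dp (fun z : Phase n => V z.1) i y) = fun _ : Phase n => (0 : ℝ) from
      funext fun y => dp_W hV i y,
    dq_eq, dd_const]

end coordvals

section opderivs

variable {u : Phase n → ℝ} (i : Fin n) (x : Phase n)

lemma dq_Zop (hu : Sm u) :
    dq (fun y => Zop k u y) i x
      = dq u i x + ∑ j, (x.1 j * dq (fun y => dq u j y) i x
          + k / 2 * x.2 j * dq (fun y => dp u j y) i x) := by
  have hrep : (fun y => Zop k u y)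
      = fun y => ∑ j, (y.1 j * dq u j y + k / 2 * y.2 j * dp u j y) := rfl
  rw [hrep, dq_sum (fun j =>
    ((Sm_q j).mul (Sm_dq hu j)).add ((contDiff_const.mul (Sm_p j)).mul (Sm_dp hu j)))]
  have hper : ∀ j : Fin n, dq (fun y => y.1 j * dq u j y + k / 2 * y.2 j * dp u j y) i x
      = dq u j x * (Pi.single i 1 : Fin n → ℝ) j
        + (x.1 j * dq (fun y => dq u j y) i x + k / 2 * x.2 j * dq (fun y => dp u j y) i x) := by
    intro j
    rw [dq_add ((Sm_q j).mul (Sm_dq hu j)) ((contDiff_const.mul (Sm_p j)).mul (Sm_dp hu j)),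
      dq_mul (Sm_q j) (Sm_dq hu j), dq_mul (contDiff_const.mul (Sm_p j)) (Sm_dp hu j),
      dq_q, dq_const_mul (Sm_p j), dq_p]
    ring
  simp only [hper]
  rw [Finset.sum_add_distrib, sum_single_mul]

lemma dp_Zop (hu : Sm u) :
    dp (fun y => Zop k u y) i x
      = k / 2 * dp u i x + ∑ j, (x.1 j * dq (fun y => dp u i y) j x
          + k / 2 * x.2 j * dp (fun y => dp u j y) i x) := by
  have hrep : (fun y => Zop k u y)
      = fun y => ∑ j, (y.1 j * dq u j y + k / 2 * y.2 j * dp u j y) := rfl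
  rw [hrep, dp_sum (fun j =>
    ((Sm_q j).mul (Sm_dq hu j)).add ((contDiff_const.mul (Sm_p j)).mul (Sm_dp hu j)))]
  have hper : ∀ j : Fin n, dp (fun y => y.1 j * dq u j y + k / 2 * y.2 j * dp u j y) i x
      = (k / 2 * dp u j x) * (Pi.single i 1 : Fin n → ℝ) j
        + (x.1 j * dq (fun y => dp u i y) j x + k / 2 * x.2 j * dp (fun y => dp u j y) i x) := by
    intro j
    rw [dp_add ((Sm_q j).mul (Sm_dq hu j)) ((contDiff_const.mul (Sm_p j)).mul (Sm_dp hu j)),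
      dp_mul (Sm_q j) (Sm_dq hu j), dp_mul (contDiff_const.mul (Sm_p j)) (Sm_dp hu j),
      dp_q, dp_const_mul (Sm_p j), dp_p, dpq_comm hu j i x]
    ring
  simp only [hper]
  rw [Finset.sum_add_distrib, sum_single_mul]

lemma dq_Xop (hV : ContDiff ℝ (⊤ : ℕ∞) V) (hu : Sm u) :
    dq (fun y => Xop m V u y) i x
      = ∑ j, (x.2 j / m j * dq (fun y => dq u j y) i x
          - (dq (fun y => dq (fun z : Phase n => V z.1) j y) i x * dp u j x
            + dV V j x.1 * dq (fun y => dp u j y) i x)) := by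
  have hrep : (fun y => Xop m V u y)
      = fun y => ∑ j, (y.2 j / m j * dq u j y
          - dq (fun z : Phase n => V z.1) j y * dp u j y) := by
    funext y
    exact Finset.sum_congr rfl fun j _ => by rw [dq_W hV]
  rw [hrep, dq_sum (fun j =>
    (((Sm_p j).div_const _).mul (Sm_dq hu j)).sub ((Sm_dq (Sm_W hV) j).mul (Sm_dp hu j)))]
  refine Finset.sum_congr rfl fun j _ => ?_
  rw [dq_sub (((Sm_p j).div_const _).mul (Sm_dq hu j)) ((Sm_dq (Sm_W hV) j).mul (Sm_dp hu j)),
    dq_mul ((Sm_p j).div_const _) (Sm_dq hu j),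
    dq_mul (Sm_dq (Sm_W hV) j) (Sm_dp hu j), dq_pdiv, dq_W hV]
  ring

lemma dp_Xop (hV : ContDiff ℝ (⊤ : ℕ∞) V) (hu : Sm u) :
    dp (fun y => Xop m V u y) i x
      = dq u i x / m i + ∑ j, (x.2 j / m j * dq (fun y => dp u i y) j x
          - dV V j x.1 * dp (fun y => dp u j y) i x) := by
  have hrep : (fun y => Xop m V u y)
      = fun y => ∑ j, (y.2 j / m j * dq u j y
          - dq (fun z : Phase n => V z.1) j y * dp u j y) := by
    funext y
    exact Finset.sum_congr rfl fun j _ => by rw [dq_W hV]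
  rw [hrep, dp_sum (fun j =>
    (((Sm_p j).div_const _).mul (Sm_dq hu j)).sub ((Sm_dq (Sm_W hV) j).mul (Sm_dp hu j)))]
  have hper : ∀ j : Fin n, dp (fun y => y.2 j / m j * dq u j y
        - dq (fun z : Phase n => V z.1) j y * dp u j y) i x
      = dq u j x * ((Pi.single i 1 : Fin n → ℝ) j / m j)
        + (x.2 j / m j * dq (fun y => dp u i y) j x
          - dV V j x.1 * dp (fun y => dp u j y) i x) := by
    intro j
    rw [dp_sub (((Sm_p j).div_const _).mul (Sm_dq hu j)) ((Sm_dq (Sm_W hV) j).mul (Sm_dp hu j)),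
      dp_mul ((Sm_p j).div_const _) (Sm_dq hu j),
      dp_mul (Sm_dq (Sm_W hV) j) (Sm_dp hu j), dp_pdiv, dpdqW_zero i j x hV,
      dpq_comm hu j i x, dq_W hV]
    ring
  simp only [hper]
  rw [Finset.sum_add_distrib, sum_single_div]

end opderivs

/-- Differentiated Euler relation on phase space. -/
lemma euler2 (hV : ContDiff ℝ (⊤ : ℕ∞) V)
    (hEuler : ∀ q : Fin n → ℝ, ∑ i, q i * dV V i q = k * V q) (j : Fin n) (x : Phase n) :
    ∑ i, x.1 i * dq (fun y => dq (fun z : Phase n => V z.1) i y) j x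
      = (k - 1) * dV V j x.1 := by
  have hFG : (fun y : Phase n => ∑ i, y.1 i * dq (fun z : Phase n => V z.1) i y)
      = fun y : Phase n => k * V y.1 := by
    funext y
    rw [Finset.sum_congr rfl fun i _ => by rw [dq_W hV]]
    exact hEuler y.1
  have hd := congrArg (fun F : Phase n → ℝ => dq F j x) hFG
  rw [dq_sum (fun i => (Sm_q i).mul (Sm_dq (Sm_W hV) i)),
    dq_const_mul (Sm_W hV)] at hd
  have hper : ∀ i : Fin n, dq (fun y => y.1 i * dq (fun z : Phase n => V z.1) i y) j x
      = dq (fun z : Phase n => V z.1) i x * (Pi.single j 1 : Fin n → ℝ) i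
        + x.1 i * dq (fun y => dq (fun z : Phase n => V z.1) i y) j x := by
    intro i
    rw [dq_mul (Sm_q i) (Sm_dq (Sm_W hV) i), dq_q]
    ring
  rw [Finset.sum_congr rfl fun i _ => hper i, Finset.sum_add_distrib, sum_single_mul,
    dq_W hV] at hd
  linarith

end BHJ

namespace BHJ

variable {n : ℕ} {m : Fin n → ℝ} {k : ℝ} {V : (Fin n → ℝ) → ℝ}

section splits

lemma split_aux (a b c d : ℝ) (S T : Fin n → ℝ) :
    a * (b + ∑ j, S j) - c * (d + ∑ j, T j)
      = (a * b - c * d) + ∑ j, (a * S j - c * T j) := by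
  have h := Finset.sum_sub_distrib (s := (Finset.univ : Finset (Fin n)))
    (f := fun j => a * S j) (g := fun j => c * T j)
  rw [mul_add, mul_add, Finset.mul_sum, Finset.mul_sum]
  linarith

lemma split_aux2 (a c d : ℝ) (S T : Fin n → ℝ) :
    a * (∑ j, S j) + c * (d + ∑ j, T j) = c * d + ∑ j, (a * S j + c * T j) := by
  have h := Finset.sum_add_distrib (s := (Finset.univ : Finset (Fin n)))
    (f := fun j => a * S j) (g := fun j => c * T j)
  rw [mul_add, Finset.mul_sum, Finset.mul_sum]
  linarith

lemma split_aux3 (a b c d : ℝ) (S T : Fin n → ℝ) :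
    (b + ∑ j, S j) * a - (d + ∑ j, T j) * c
      = (b * a - d * c) + ∑ j, (S j * a - T j * c) := by
  have h := Finset.sum_sub_distrib (s := (Finset.univ : Finset (Fin n)))
    (f := fun j => S j * a) (g := fun j => T j * c)
  rw [add_mul, add_mul, Finset.sum_mul, Finset.sum_mul]
  linarith

end splits

section comm

variable {u : Phase n → ℝ}

/-- The commutator `[X,Z] = (1-k/2) X` (uses the Euler relation). -/
lemma XZ_comm (hV : ContDiff ℝ (⊤ : ℕ∞) V)
    (hEuler : ∀ q : Fin n → ℝ, ∑ i, q i * dV V i q = k * V q) (hu : Sm u) (x : Phase n) :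
    Xop m V (fun y => Zop k u y) x
      = Zop k (fun y => Xop m V u y) x + (1 - k / 2) * Xop m V u x := by
  have hXZ : Xop m V (fun y => Zop k u y) x
      = (∑ i, (x.2 i / m i * dq u i x - dV V i x.1 * (k / 2 * dp u i x)))
        + ∑ i, ∑ j, (x.2 i / m i * (x.1 j * dq (fun y => dq u j y) i x
              + k / 2 * x.2 j * dq (fun y => dp u j y) i x)
            - dV V i x.1 * (x.1 j * dq (fun y => dp u i y) j x
              + k / 2 * x.2 j * dp (fun y => dp u j y) i x)) := by
    rw [show Xop m V (fun y => Zop k u y) x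
        = ∑ i, (x.2 i / m i * dq (fun y => Zop k u y) i x
          - dV V i x.1 * dp (fun y => Zop k u y) i x) from rfl,
      Finset.sum_congr rfl (fun i _ => by
        rw [dq_Zop i x hu, dp_Zop i x hu, split_aux]),
      Finset.sum_add_distrib]
  have hZX : Zop k (fun y => Xop m V u y) x
      = (∑ i, (k / 2 * x.2 i * (dq u i x / m i)))
        + ∑ i, ∑ j, (x.1 i * (x.2 j / m j * dq (fun y => dq u j y) i x
              - (dq (fun y => dq (fun z : Phase n => V z.1) j y) i x * dp u j x
                + dV V j x.1 * dq (fun y => dp u j y) i x))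
            + k / 2 * x.2 i * (x.2 j / m j * dq (fun y => dp u i y) j x
              - dV V j x.1 * dp (fun y => dp u j y) i x)) := by
    rw [show Zop k (fun y => Xop m V u y) x
        = ∑ i, (x.1 i * dq (fun y => Xop m V u y) i x
          + k / 2 * x.2 i * dp (fun y => Xop m V u y) i x) from rfl,
      Finset.sum_congr rfl (fun i _ => by
        rw [dq_Xop i x hV hu, dp_Xop i x hV hu, split_aux2]),
      Finset.sum_add_distrib]
  have hsplit : ∀ i j : Fin n, (x.1 i * (x.2 j / m j * dq (fun y => dq u j y) i x
          - (dq (fun y => dq (fun z : Phase n => V z.1) j y) i x * dp u j x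
            + dV V j x.1 * dq (fun y => dp u j y) i x))
        + k / 2 * x.2 i * (x.2 j / m j * dq (fun y => dp u i y) j x
          - dV V j x.1 * dp (fun y => dp u j y) i x))
      = (x.1 i * (x.2 j / m j * dq (fun y => dq u j y) i x
            - dV V j x.1 * dq (fun y => dp u j y) i x)
          + k / 2 * x.2 i * (x.2 j / m j * dq (fun y => dp u i y) j x
            - dV V j x.1 * dp (fun y => dp u j y) i x))
        - x.1 i * (dq (fun y => dq (fun z : Phase n => V z.1) j y) i x * dp u j x) := by
    intro i j
    ring
  have hQW : (∑ i, ∑ j, x.1 i * (dq (fun y => dq (fun z : Phase n => V z.1) j y) i x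
        * dp u j x))
      = ∑ i, (k - 1) * dV V i x.1 * dp u i x := by
    rw [Finset.sum_comm]
    refine Finset.sum_congr rfl fun j _ => ?_
    rw [Finset.sum_congr rfl (fun i _ => by
        rw [dqq_comm (Sm_W hV) j i x, ← mul_assoc]),
      ← Finset.sum_mul, euler2 hV hEuler j x]
  have hCD : (∑ i, ∑ j, (x.2 i / m i * (x.1 j * dq (fun y => dq u j y) i x
          + k / 2 * x.2 j * dq (fun y => dp u j y) i x)
        - dV V i x.1 * (x.1 j * dq (fun y => dp u i y) j x
          + k / 2 * x.2 j * dp (fun y => dp u j y) i x)))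
      = ∑ i, ∑ j, (x.1 i * (x.2 j / m j * dq (fun y => dq u j y) i x
            - dV V j x.1 * dq (fun y => dp u j y) i x)
          + k / 2 * x.2 i * (x.2 j / m j * dq (fun y => dp u i y) j x
            - dV V j x.1 * dp (fun y => dp u j y) i x)) := by
    rw [Finset.sum_comm]
    refine Finset.sum_congr rfl fun a _ => Finset.sum_congr rfl fun b _ => ?_
    rw [dqq_comm hu a b x, dpp_comm hu a b x]
    ring
  have hZX2 : Zop k (fun y => Xop m V u y) x
      = (∑ i, (k / 2 * x.2 i * (dq u i x / m i)))
        + ((∑ i, ∑ j, (x.1 i * (x.2 j / m j * dq (fun y => dq u j y) i x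
              - dV V j x.1 * dq (fun y => dp u j y) i x)
            + k / 2 * x.2 i * (x.2 j / m j * dq (fun y => dp u i y) j x
              - dV V j x.1 * dp (fun y => dp u j y) i x)))
          - ∑ i, (k - 1) * dV V i x.1 * dp u i x) := by
    rw [hZX]
    congr 1
    rw [Finset.sum_congr rfl (fun i _ => Finset.sum_congr rfl fun j _ => hsplit i j)]
    simp only [Finset.sum_sub_distrib]
    rw [hQW]
  rw [hXZ, hZX2]
  have hE : (∑ i, (x.2 i / m i * dq u i x - dV V i x.1 * (k / 2 * dp u i x)))
      = (∑ i, (k / 2 * x.2 i * (dq u i x / m i))) - (∑ i, (k - 1) * dV V i x.1 * dp u i x)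
        + (1 - k / 2) * Xop m V u x := by
    rw [show Xop m V u x = ∑ i, (x.2 i / m i * dq u i x - dV V i x.1 * dp u i x) from rfl,
      Finset.mul_sum, ← Finset.sum_sub_distrib, ← Finset.sum_add_distrib]
    refine Finset.sum_congr rfl fun i _ => ?_
    ring
  linear_combination hCD + hE

end comm

end BHJ

namespace BHJ

variable {n : ℕ} {m : Fin n → ℝ} {k : ℝ} {V : (Fin n → ℝ) → ℝ}

section zpoisson

variable {u v : Phase n → ℝ}

lemma dq_bC (hu : Sm u) (hv : Sm v) (j : Fin n) (x : Phase n) :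
    dq (fun y => bracketC u v y) j x
      = ∑ i, (dq u i x * dq (fun y => dp v i y) j x + dp v i x * dq (fun y => dq u i y) j x
          - dp u i x * dq (fun y => dq v i y) j x - dq v i x * dq (fun y => dp u i y) j x) := by
  rw [show (fun y => bracketC u v y)
      = fun y => ∑ i, (dq u i y * dp v i y - dp u i y * dq v i y) from rfl,
    dq_sum (fun i => ((Sm_dq hu i).mul (Sm_dp hv i)).sub ((Sm_dp hu i).mul (Sm_dq hv i)))]
  refine Finset.sum_congr rfl fun i _ => ?_
  rw [dq_sub ((Sm_dq hu i).mul (Sm_dp hv i)) ((Sm_dp hu i).mul (Sm_dq hv i)),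
    dq_mul (Sm_dq hu i) (Sm_dp hv i), dq_mul (Sm_dp hu i) (Sm_dq hv i)]
  ring

lemma dp_bC (hu : Sm u) (hv : Sm v) (j : Fin n) (x : Phase n) :
    dp (fun y => bracketC u v y) j x
      = ∑ i, (dq u i x * dp (fun y => dp v i y) j x + dp v i x * dq (fun y => dp u j y) i x
          - dp u i x * dq (fun y => dp v j y) i x - dq v i x * dp (fun y => dp u i y) j x) := by
  rw [show (fun y => bracketC u v y)
      = fun y => ∑ i, (dq u i y * dp v i y - dp u i y * dq v i y) from rfl,
    dp_sum (fun i => ((Sm_dq hu i).mul (Sm_dp hv i)).sub ((Sm_dp hu i).mul (Sm_dq hv i)))]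
  refine Finset.sum_congr rfl fun i _ => ?_
  rw [dp_sub ((Sm_dq hu i).mul (Sm_dp hv i)) ((Sm_dp hu i).mul (Sm_dq hv i)),
    dp_mul (Sm_dq hu i) (Sm_dp hv i), dp_mul (Sm_dp hu i) (Sm_dq hv i),
    dpq_comm hu i j x, dpq_comm hv i j x]
  ring

/-- `Z` is an "almost Poisson" vector field: `L_Z P = -(1+k/2) P`. -/
lemma Z_poisson (hu : Sm u) (hv : Sm v) (x : Phase n) :
    Zop k (fun y => bracketC u v y) x
      = bracketC (fun y => Zop k u y) v x - bracketC (fun y => Zop k v y) u x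
        - (1 + k / 2) * bracketC u v x := by
  have hL : Zop k (fun y => bracketC u v y) x
      = ∑ j, ∑ i, (x.1 j * (dq u i x * dq (fun y => dp v i y) j x
            + dp v i x * dq (fun y => dq u i y) j x
            - dp u i x * dq (fun y => dq v i y) j x - dq v i x * dq (fun y => dp u i y) j x)
          + k / 2 * x.2 j * (dq u i x * dp (fun y => dp v i y) j x
            + dp v i x * dq (fun y => dp u j y) i x
            - dp u i x * dq (fun y => dp v j y) i x - dq v i x * dp (fun y => dp u i y) j x)) := by
    rw [show Zop k (fun y => bracketC u v y) x
        = ∑ j, (x.1 j * dq (fun y => bracketC u v y) j x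
          + k / 2 * x.2 j * dp (fun y => bracketC u v y) j x) from rfl]
    refine Finset.sum_congr rfl fun j _ => ?_
    rw [dq_bC hu hv j x, dp_bC hu hv j x, Finset.mul_sum, Finset.mul_sum,
      ← Finset.sum_add_distrib]
  have hRu : bracketC (fun y => Zop k u y) v x
      = (∑ i, (dq u i x * dp v i x - k / 2 * dp u i x * dq v i x))
        + ∑ i, ∑ j, ((x.1 j * dq (fun y => dq u j y) i x
              + k / 2 * x.2 j * dq (fun y => dp u j y) i x) * dp v i x
            - (x.1 j * dq (fun y => dp u i y) j x
              + k / 2 * x.2 j * dp (fun y => dp u j y) i x) * dq v i x) := by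
    rw [show bracketC (fun y => Zop k u y) v x
        = ∑ i, (dq (fun y => Zop k u y) i x * dp v i x
          - dp (fun y => Zop k u y) i x * dq v i x) from rfl,
      Finset.sum_congr rfl (fun i _ => by
        rw [dq_Zop i x hu, dp_Zop i x hu, split_aux3]),
      Finset.sum_add_distrib]
  have hRv : bracketC (fun y => Zop k v y) u x
      = (∑ i, (dq v i x * dp u i x - k / 2 * dp v i x * dq u i x))
        + ∑ i, ∑ j, ((x.1 j * dq (fun y => dq v j y) i x
              + k / 2 * x.2 j * dq (fun y => dp v j y) i x) * dp u i x
            - (x.1 j * dq (fun y => dp v i y) j x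
              + k / 2 * x.2 j * dp (fun y => dp v j y) i x) * dq u i x) := by
    rw [show bracketC (fun y => Zop k v y) u x
        = ∑ i, (dq (fun y => Zop k v y) i x * dp u i x
          - dp (fun y => Zop k v y) i x * dq u i x) from rfl,
      Finset.sum_congr rfl (fun i _ => by
        rw [dq_Zop i x hv, dp_Zop i x hv, split_aux3]),
      Finset.sum_add_distrib]
  have hDD : (∑ j, ∑ i, (x.1 j * (dq u i x * dq (fun y => dp v i y) j x
            + dp v i x * dq (fun y => dq u i y) j x
            - dp u i x * dq (fun y => dq v i y) j x - dq v i x * dq (fun y => dp u i y) j x)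
          + k / 2 * x.2 j * (dq u i x * dp (fun y => dp v i y) j x
            + dp v i x * dq (fun y => dp u j y) i x
            - dp u i x * dq (fun y => dp v j y) i x - dq v i x * dp (fun y => dp u i y) j x)))
      = (∑ i, ∑ j, ((x.1 j * dq (fun y => dq u j y) i x
              + k / 2 * x.2 j * dq (fun y => dp u j y) i x) * dp v i x
            - (x.1 j * dq (fun y => dp u i y) j x
              + k / 2 * x.2 j * dp (fun y => dp u j y) i x) * dq v i x))
        - (∑ i, ∑ j, ((x.1 j * dq (fun y => dq v j y) i x
              + k / 2 * x.2 j * dq (fun y => dp v j y) i x) * dp u i x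
            - (x.1 j * dq (fun y => dp v i y) j x
              + k / 2 * x.2 j * dp (fun y => dp v j y) i x) * dq u i x)) := by
    simp only [← Finset.sum_sub_distrib]
    rw [Finset.sum_comm]
    refine Finset.sum_congr rfl fun a _ => Finset.sum_congr rfl fun b _ => ?_
    rw [dqq_comm hu a b x, dqq_comm hv a b x, dpp_comm hu a b x, dpp_comm hv a b x]
    ring
  have hE : (∑ i, (dq u i x * dp v i x - k / 2 * dp u i x * dq v i x))
      - (∑ i, (dq v i x * dp u i x - k / 2 * dp v i x * dq u i x))
      - (1 + k / 2) * bracketC u v x = 0 := by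
    rw [show bracketC u v x = ∑ i, (dq u i x * dp v i x - dp u i x * dq v i x) from rfl,
      Finset.mul_sum, ← Finset.sum_sub_distrib, ← Finset.sum_sub_distrib]
    exact Finset.sum_eq_zero fun i _ => by ring
  rw [hL, hRu, hRv]
  linear_combination hDD - hE

end zpoisson

end BHJ

namespace BHJ

variable {n : ℕ} {m : Fin n → ℝ} {k : ℝ} {V : (Fin n → ℝ) → ℝ}

lemma hat_eq (f g : Phase n → ℝ) :
    (fun y => bracketHat m k V f g y)
      = fun y => (1 - k / 2) * Ham m V y * bracketC f g y
          + (Xop m V f y * Zop k g y - Zop k f y * Xop m V g y) := by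
  funext y
  unfold bracketHat
  rw [bracketP_eq]

section shapes

variable {u1 u2 u3 u4 u5 u6 : Phase n → ℝ} {x : Phase n}

lemma Lop_shape {α β : Fin n → ℝ} (c : ℝ) (h1 : Sm u1) (h2 : Sm u2) (h3 : Sm u3)
    (h4 : Sm u4) (h5 : Sm u5) (h6 : Sm u6) :
    Lop α β (fun y => c * u1 y * u2 y + (u3 y * u4 y - u5 y * u6 y)) x
      = c * (u1 x * Lop α β u2 x + u2 x * Lop α β u1 x)
        + ((u3 x * Lop α β u4 x + u4 x * Lop α β u3 x)
          - (u5 x * Lop α β u6 x + u6 x * Lop α β u5 x)) := by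
  rw [Lop_add ((contDiff_const.mul h1).mul h2) ((h3.mul h4).sub (h5.mul h6)),
    Lop_sub (h3.mul h4) (h5.mul h6), Lop_mul h3 h4, Lop_mul h5 h6,
    Lop_mul (contDiff_const.mul h1) h2, Lop_const_mul h1 c]
  ring

lemma bC_shape (c : ℝ) {w : Phase n → ℝ} (h1 : Sm u1) (h2 : Sm u2) (h3 : Sm u3)
    (h4 : Sm u4) (h5 : Sm u5) (h6 : Sm u6) (x : Phase n) :
    bracketC (fun y => c * u1 y * u2 y + (u3 y * u4 y - u5 y * u6 y)) w x
      = c * (u1 x * bracketC u2 w x + u2 x * bracketC u1 w x)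
        + ((u3 x * bracketC u4 w x + u4 x * bracketC u3 w x)
          - (u5 x * bracketC u6 w x + u6 x * bracketC u5 w x)) := by
  rw [bC_eq_Lop, Lop_shape c h1 h2 h3 h4 h5 h6]
  simp only [← bC_eq_Lop]

lemma Xop_shape (c : ℝ) (h1 : Sm u1) (h2 : Sm u2) (h3 : Sm u3)
    (h4 : Sm u4) (h5 : Sm u5) (h6 : Sm u6) (x : Phase n) :
    Xop m V (fun y => c * u1 y * u2 y + (u3 y * u4 y - u5 y * u6 y)) x
      = c * (u1 x * Xop m V u2 x + u2 x * Xop m V u1 x)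
        + ((u3 x * Xop m V u4 x + u4 x * Xop m V u3 x)
          - (u5 x * Xop m V u6 x + u6 x * Xop m V u5 x)) := by
  rw [Xop_eq_Lop, Lop_shape c h1 h2 h3 h4 h5 h6]
  simp only [← Xop_eq_Lop]

lemma Zop_shape (c : ℝ) (h1 : Sm u1) (h2 : Sm u2) (h3 : Sm u3)
    (h4 : Sm u4) (h5 : Sm u5) (h6 : Sm u6) (x : Phase n) :
    Zop k (fun y => c * u1 y * u2 y + (u3 y * u4 y - u5 y * u6 y)) x
      = c * (u1 x * Zop k u2 x + u2 x * Zop k u1 x)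
        + ((u3 x * Zop k u4 x + u4 x * Zop k u3 x)
          - (u5 x * Zop k u6 x + u6 x * Zop k u5 x)) := by
  rw [Zop_eq_Lop, Lop_shape c h1 h2 h3 h4 h5 h6]
  simp only [← Zop_eq_Lop]

end shapes

/-- Full expansion of one copy of the iterated hat bracket. -/
lemma hat_hat (hV : ContDiff ℝ (⊤ : ℕ∞) V)
    (hEuler : ∀ q : Fin n → ℝ, ∑ i, q i * dV V i q = k * V q)
    {f g h : Phase n → ℝ} (hf : Sm f) (hg : Sm g) (hh : Sm h) (x : Phase n) :
    bracketHat m k V (fun y => bracketHat m k V f g y) h x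
      = ((1 - k / 2) * Ham m V x) * (((1 - k / 2) * Ham m V x)
              * bracketC (fun y => bracketC f g y) h x
            - (1 - k / 2) * (bracketC f g x * Xop m V h x)
            + Xop m V f x * bracketC (fun y => Zop k g y) h x
            + Zop k g x * bracketC (fun y => Xop m V f y) h x
            - Zop k f x * bracketC (fun y => Xop m V g y) h x
            - Xop m V g x * bracketC (fun y => Zop k f y) h x)
        + (((1 - k / 2) * Ham m V x) * (bracketC (fun y => Xop m V f y) g x
              - bracketC (fun y => Xop m V g y) f x)
            + Xop m V (fun y => Xop m V f y) x * Zop k g x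
            + Xop m V f x * (Zop k (fun y => Xop m V g y) x + (1 - k / 2) * Xop m V g x)
            - (Zop k (fun y => Xop m V f y) x + (1 - k / 2) * Xop m V f x) * Xop m V g x
            - Zop k f x * Xop m V (fun y => Xop m V g y) x) * Zop k h x
        - (k * ((1 - k / 2) * Ham m V x) * bracketC f g x
            + ((1 - k / 2) * Ham m V x) * (bracketC (fun y => Zop k f y) g x
              - bracketC (fun y => Zop k g y) f x - (1 + k / 2) * bracketC f g x)
            + Zop k (fun y => Xop m V f y) x * Zop k g x
            + Xop m V f x * Zop k (fun y => Zop k g y) x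
            - Zop k (fun y => Zop k f y) x * Xop m V g x
            - Zop k f x * Zop k (fun y => Xop m V g y) x) * Xop m V h x := by
  rw [hat_eq f g]
  unfold bracketHat
  rw [bracketP_eq]
  rw [bC_shape (1 - k / 2) (Sm_Ham hV) (Sm_bC hf hg) (Sm_X hV hf) (Sm_Z hg)
      (Sm_Z hf) (Sm_X hV hg) x,
    Xop_shape (1 - k / 2) (Sm_Ham hV) (Sm_bC hf hg) (Sm_X hV hf) (Sm_Z hg)
      (Sm_Z hf) (Sm_X hV hg) x,
    Zop_shape (1 - k / 2) (Sm_Ham hV) (Sm_bC hf hg) (Sm_X hV hf) (Sm_Z hg)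
      (Sm_Z hf) (Sm_X hV hg) x,
    bC_Ham_left hV h x, X_poisson hV hf hg x, Z_poisson hf hg x, Xop_Ham hV x,
    Zop_Ham hV hEuler x, XZ_comm hV hEuler hg x, XZ_comm hV hEuler hf x]
  ring

end BHJ


/-- for `k ≠ ±2`, the bracket `{·,·}^` satisfies the Jacobi identity. -/
theorem bracketHat_jacobi (n : ℕ) (m : Fin n → ℝ) (hm : ∀ i, 0 < m i) (k : ℝ)
    (hk : k ≠ 2) (hk' : k ≠ -2)
    (V : (Fin n → ℝ) → ℝ) (hV : ContDiff ℝ (⊤ : ℕ∞) V)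
    (hEuler : ∀ q : Fin n → ℝ, ∑ i, q i * dV V i q = k * V q)
    (f g h : Phase n → ℝ) (hf : ContDiff ℝ (⊤ : ℕ∞) f) (hg : ContDiff ℝ (⊤ : ℕ∞) g)
    (hh : ContDiff ℝ (⊤ : ℕ∞) h) :
    ∀ x : Phase n,
      bracketHat m k V (fun y => bracketHat m k V f g y) h x
        + bracketHat m k V (fun y => bracketHat m k V g h y) f x
        + bracketHat m k V (fun y => bracketHat m k V h f y) g x = 0 := by
  intro x
  have hJ := BHJ.bC_jacobi hf hg hh x
  rw [BHJ.hat_hat hV hEuler hf hg hh x, BHJ.hat_hat hV hEuler hg hh hf x,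
    BHJ.hat_hat hV hEuler hh hf hg x]
  have hJ' : bracketC (fun y => bracketC h f y) g x
      = -bracketC (fun y => bracketC f g y) h x
        - bracketC (fun y => bracketC g h y) f x := by linarith
  rw [hJ']
  ring
end
end

section
/- Assume k ≠ 2 and k ≠ −2. Then at every point x = (q,p) ∈ ℝⁿ×ℝⁿ with H(x) ≠ 0, the 2n×2n matrix (1 − k/2)·H(x)·J + Π(x) is invertible; that is, the invariant bivector P̂ = (1 − k/2)H·P + P′ is non-degenerate wherever H does not vanish. -/
open scoped BigOperators

noncomputable section

/-- The matrix `J = [[0, Iₙ], [−Iₙ, 0]]` of the canonical Poisson bivector. -/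
def Jmat (n : ℕ) : Matrix (Fin n ⊕ Fin n) (Fin n ⊕ Fin n) ℝ :=
  Matrix.fromBlocks 0 1 (-1) 0

open Matrix in
lemma aux_vecMulVec_mul_mat {n : ℕ} (a b : (Fin n ⊕ Fin n) → ℝ)
    (M : Matrix (Fin n ⊕ Fin n) (Fin n ⊕ Fin n) ℝ) :
    vecMulVec a b * M = vecMulVec a (b ᵥ* M) := by
  ext i j
  simp only [mul_apply, vecMulVec_apply, vecMul, dotProduct, Finset.mul_sum]
  exact Finset.sum_congr rfl fun k _ => by ring

open Matrix in
lemma aux_vecMulVec_mul_vecMulVec {n : ℕ} (a b c d : (Fin n ⊕ Fin n) → ℝ) :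
    vecMulVec a b * vecMulVec c d = (b ⬝ᵥ c) • vecMulVec a d := by
  ext i j
  simp only [mul_apply, vecMulVec_apply, Matrix.smul_apply, smul_eq_mul, dotProduct, Finset.sum_mul]
  exact Finset.sum_congr rfl fun k _ => by ring

open Matrix in
lemma aux_jmat_mul_jmat (n : ℕ) : Jmat n * Jmat n = -1 := by
  rw [Jmat, fromBlocks_multiply]
  ext (i|i) (j|j) <;>
    simp [Matrix.one_apply, Matrix.fromBlocks]

open Matrix in
lemma aux_vecMul_jmat {n : ℕ} (v : (Fin n ⊕ Fin n) → ℝ) :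
    v ᵥ* Jmat n = Sum.elim (fun j => -v (Sum.inr j)) (fun j => v (Sum.inl j)) := by
  ext (j|j) <;>
    simp [Jmat, vecMul, dotProduct, Fintype.sum_sum_type, Matrix.fromBlocks,
      Matrix.one_apply, mul_ite]


/-- for `k ≠ ±2`, at every point with `H(x) ≠ 0` the matrix
`(1 − k/2)·H(x)·J + Π(x)` of the bivector `P̂ = (1 − k/2)H·P + P′` is invertible. -/
theorem hat_bivector_nondegenerate (n : ℕ) (m : Fin n → ℝ) (hm : ∀ i, 0 < m i) (k : ℝ)
    (hk : k ≠ 2) (hk' : k ≠ -2)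
    (V : (Fin n → ℝ) → ℝ) (hV : ContDiff ℝ (⊤ : ℕ∞) V)
    (hEuler : ∀ q : Fin n → ℝ, ∑ i, q i * dV V i q = k * V q) :
    ∀ x : Phase n, Ham m V x ≠ 0 →
      IsUnit (((1 - k / 2) * Ham m V x) • Jmat n + PiMat m k V x) := by
  classical
  intro x hH
  open Matrix in
  set H : ℝ := Ham m V x with hHdef
  set α : ℝ := (1 - k / 2) * H with hαdef
  have hα : α ≠ 0 := by
    apply mul_ne_zero _ hH
    intro h
    apply hk
    linarith [h]
  have hγ : α + k * H ≠ 0 := by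
    have : α + k * H = (1 + k / 2) * H := by rw [hαdef]; ring
    rw [this]
    apply mul_ne_zero _ hH
    intro h
    apply hk'
    linarith [h]
  set e : (Fin n ⊕ Fin n) → ℝ :=
    Sum.elim (fun i => x.2 i / m i) (fun i => -dV V i x.1) with hedef
  set f : (Fin n ⊕ Fin n) → ℝ :=
    Sum.elim (fun i => x.1 i) (fun i => k / 2 * x.2 i) with hfdef
  set J := Jmat n with hJdef
  set E := Matrix.vecMulVec e f with hEdef
  set F := Matrix.vecMulVec f e with hFdef
  -- decomposition of the matrix
  have hM : ((1 - k / 2) * Ham m V x) • Jmat n + PiMat m k V x = α • J + E - F := by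
    rw [hEdef, hFdef, hJdef, hαdef, hHdef]
    ext (i|i) (j|j) <;>
      simp [PiMat, Jmat, Acoef, Bcoef, Ccoef, Matrix.vecMulVec_apply, hedef, hfdef,
        Matrix.one_apply, Matrix.fromBlocks, mul_ite] <;>
      ring
  rw [hM]
  -- dot product facts
  have hfJ : f ᵥ* J = Sum.elim (fun j => -(k / 2 * x.2 j)) (fun j => x.1 j) := by
    rw [hJdef, aux_vecMul_jmat]; rfl
  have heJ : e ᵥ* J = Sum.elim (fun j => dV V j x.1) (fun j => x.2 j / m j) := by
    rw [hJdef, aux_vecMul_jmat]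
    ext (j|j) <;> simp [hedef]
  have hkin : ∀ (c : ℝ), (∑ j, c * x.2 j * (x.2 j / m j)) = (2 * c) * ∑ j, x.2 j ^ 2 / (2 * m j) := by
    intro c
    rw [Finset.mul_sum]
    exact Finset.sum_congr rfl fun j _ => by ring
  have hc1 : (f ᵥ* J) ⬝ᵥ e = -(k * H) := by
    rw [hfJ, hedef]
    simp only [dotProduct, Fintype.sum_sum_type, Sum.elim_inl, Sum.elim_inr]
    have h1 : (∑ j, -(k / 2 * x.2 j) * (x.2 j / m j)) = ∑ j, (-(k/2)) * x.2 j * (x.2 j / m j) := by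
      exact Finset.sum_congr rfl fun j _ => by ring
    have h2 : (∑ j, x.1 j * -dV V j x.1) = -(k * V x.1) := by
      rw [← hEuler x.1, ← Finset.sum_neg_distrib]
      exact Finset.sum_congr rfl fun j _ => by ring
    rw [h1, hkin, h2, hHdef, Ham]
    ring
  have hc2 : (e ᵥ* J) ⬝ᵥ f = k * H := by
    rw [heJ, hfdef]
    simp only [dotProduct, Fintype.sum_sum_type, Sum.elim_inl, Sum.elim_inr]
    have h1 : (∑ j, dV V j x.1 * x.1 j) = k * V x.1 := by
      rw [← hEuler x.1]
      exact Finset.sum_congr rfl fun j _ => by ring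
    have h2 : (∑ j, x.2 j / m j * (k / 2 * x.2 j)) = ∑ j, (k/2) * x.2 j * (x.2 j / m j) := by
      exact Finset.sum_congr rfl fun j _ => by ring
    rw [h1, h2, hkin, hHdef, Ham]
    ring
  have hc3 : (f ᵥ* J) ⬝ᵥ f = 0 := by
    rw [hfJ, hfdef]
    simp only [dotProduct, Fintype.sum_sum_type, Sum.elim_inl, Sum.elim_inr]
    have : (∑ j, -(k / 2 * x.2 j) * x.1 j) = -∑ j, x.1 j * (k / 2 * x.2 j) := by
      rw [← Finset.sum_neg_distrib]
      exact Finset.sum_congr rfl fun j _ => by ring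
    rw [this]; ring
  have hc4 : (e ᵥ* J) ⬝ᵥ e = 0 := by
    rw [heJ, hedef]
    simp only [dotProduct, Fintype.sum_sum_type, Sum.elim_inl, Sum.elim_inr]
    have : (∑ j, dV V j x.1 * (x.2 j / m j)) = -∑ j, x.2 j / m j * -dV V j x.1 := by
      rw [← Finset.sum_neg_distrib]
      exact Finset.sum_congr rfl fun j _ => by ring
    rw [this]; ring
  -- matrix relations
  have hJJ : J * J = -1 := aux_jmat_mul_jmat n
  have hEJE : E * J * E = (-(k * H)) • E := by
    rw [hEdef, aux_vecMulVec_mul_mat, aux_vecMulVec_mul_vecMulVec, hc1]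
  have hFJF : F * J * F = (k * H) • F := by
    rw [hFdef, aux_vecMulVec_mul_mat, aux_vecMulVec_mul_vecMulVec, hc2]
  have hEJF : E * J * F = 0 := by
    rw [hEdef, hFdef, aux_vecMulVec_mul_mat, aux_vecMulVec_mul_vecMulVec, hc3, zero_smul]
  have hFJE : F * J * E = 0 := by
    rw [hFdef, hEdef, aux_vecMulVec_mul_mat, aux_vecMulVec_mul_vecMulVec, hc4, zero_smul]
  set β : ℝ := 1 / (α * (α + k * H)) with hβdef
  set N := (-(1/α)) • J + (-β) • (J * E * J) + β • (J * F * J) with hNdef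
  have key : (α • J + E - F) * N = 1 := by
    rw [hNdef]
    simp only [add_mul, mul_add, sub_mul, mul_sub, smul_mul_assoc, mul_smul_comm, smul_smul,
      ← mul_assoc]
    have p1 : J * J * E * J = -(E * J) := by rw [hJJ]; simp
    have p2 : J * J * F * J = -(F * J) := by rw [hJJ]; simp
    rw [p1, p2, hEJE, hEJF, hFJE, hFJF, hJJ]
    simp only [neg_mul, smul_mul_assoc, zero_mul, sub_zero, zero_sub, smul_neg, smul_smul, neg_smul]
    clear_value α β
    match_scalars <;> (try rw [hβdef]) <;> field_simp [hα, hγ] <;> try ring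
  have : Invertible (α • J + E - F) := invertibleOfRightInverse _ _ key
  exact isUnit_of_invertible _
end
end
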